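/- arXiv:2301.10130 — 11 statements merged into one kernel-verified Lean document; each statement's English description precedes it below -/
import Mathlib

section
/- Let *₃ : V₁ × V₂ → V₃ be a composition map between quadratic spaces of equal finite dimension with nonsingular polar forms (i.e. q₃(x₁ *₃ x₂) = q₁(x₁)q₂(x₂) for all x₁, x₂). Then the derived bilinear map *₂ : V₃ × V₁ → V₂ determined by b₂(x₂, x₃ *₂ x₁) = b₃(x₃, x₁ *₃ x₂) satisfies (x₁ *₃ x₂) *₂ x₁ = q₁(x₁)·x₂ for all x₁ ∈ V₁, x₂ ∈ V₂. -/
open QuadraticMap Module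

/-- For a composition map `*₃ : V₁ × V₂ → V₃` between quadratic
spaces of equal finite dimension with nonsingular polar forms, the derived map
`*₂ : V₃ × V₁ → V₂` (characterized by `b₂(x₂, x₃ *₂ x₁) = b₃(x₃, x₁ *₃ x₂)`)
satisfies `(x₁ *₃ x₂) *₂ x₁ = q₁(x₁) • x₂`. -/
theorem statement1 {F V₁ V₂ V₃ : Type*} [Field F]
    [AddCommGroup V₁] [Module F V₁] [AddCommGroup V₂] [Module F V₂]
    [AddCommGroup V₃] [Module F V₃]
    [FiniteDimensional F V₁] [FiniteDimensional F V₂] [FiniteDimensional F V₃]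
    (Q₁ : QuadraticForm F V₁) (Q₂ : QuadraticForm F V₂) (Q₃ : QuadraticForm F V₃)
    (h₁ : ∀ x : V₁, (∀ y, polar Q₁ x y = 0) → x = 0)
    (h₂ : ∀ x : V₂, (∀ y, polar Q₂ x y = 0) → x = 0)
    (h₃ : ∀ x : V₃, (∀ y, polar Q₃ x y = 0) → x = 0)
    (hd₁₂ : finrank F V₁ = finrank F V₂) (hd₂₃ : finrank F V₂ = finrank F V₃)
    (m₃ : V₁ →ₗ[F] V₂ →ₗ[F] V₃)
    (hcomp : ∀ x₁ x₂, Q₃ (m₃ x₁ x₂) = Q₁ x₁ * Q₂ x₂)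
    (m₂ : V₃ →ₗ[F] V₁ →ₗ[F] V₂)
    (hadj₂ : ∀ x₁ x₂ x₃, polar Q₂ x₂ (m₂ x₃ x₁) = polar Q₃ x₃ (m₃ x₁ x₂)) :
    ∀ (x₁ : V₁) (x₂ : V₂), m₂ (m₃ x₁ x₂) x₁ = Q₁ x₁ • x₂ := by

  intro x₁ x₂
  have key : ∀ y : V₂, polar Q₃ (m₃ x₁ x₂) (m₃ x₁ y) = Q₁ x₁ * polar Q₂ x₂ y := by
    intro y
    unfold polar
    rw [← map_add, hcomp, hcomp, hcomp]
    ring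
  have hz : m₂ (m₃ x₁ x₂) x₁ - Q₁ x₁ • x₂ = 0 := by
    apply h₂
    intro y
    rw [polar_comm, polar_sub_right, hadj₂, key, polar_smul_right, smul_eq_mul,
      polar_comm Q₂ y x₂, sub_self]
  exact sub_eq_zero.mp hz
end

section
/- Let *₃ : V₁ × V₂ → V₃ be a composition map between quadratic spaces of equal finite dimension with nonsingular polar forms, and let *₁ : V₂ × V₃ → V₁ be its first derived map. Then *₁ is also a composition map: q₁(x₂ *₁ x₃) = q₂(x₂)q₃(x₃) for all x₂ ∈ V₂ and x₃ ∈ V₃. -/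
open QuadraticMap Module

/-- For a composition map `*₃ : V₁ × V₂ → V₃` between quadratic
spaces of equal finite dimension with nonsingular polar forms, the first derived map
`*₁ : V₂ × V₃ → V₁` (characterized by `b₁(x₁, x₂ *₁ x₃) = b₃(x₃, x₁ *₃ x₂)`)
is also a composition map: `q₁(x₂ *₁ x₃) = q₂(x₂) q₃(x₃)`. -/
theorem statement2 {F V₁ V₂ V₃ : Type*} [Field F]
    [AddCommGroup V₁] [Module F V₁] [AddCommGroup V₂] [Module F V₂]
    [AddCommGroup V₃] [Module F V₃]
    [FiniteDimensional F V₁] [FiniteDimensional F V₂] [FiniteDimensional F V₃]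
    (Q₁ : QuadraticForm F V₁) (Q₂ : QuadraticForm F V₂) (Q₃ : QuadraticForm F V₃)
    (h₁ : ∀ x : V₁, (∀ y, polar Q₁ x y = 0) → x = 0)
    (h₂ : ∀ x : V₂, (∀ y, polar Q₂ x y = 0) → x = 0)
    (h₃ : ∀ x : V₃, (∀ y, polar Q₃ x y = 0) → x = 0)
    (hd₁₂ : finrank F V₁ = finrank F V₂) (hd₂₃ : finrank F V₂ = finrank F V₃)
    (m₃ : V₁ →ₗ[F] V₂ →ₗ[F] V₃)
    (hcomp : ∀ x₁ x₂, Q₃ (m₃ x₁ x₂) = Q₁ x₁ * Q₂ x₂)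
    (m₁ : V₂ →ₗ[F] V₃ →ₗ[F] V₁)
    (hadj₁ : ∀ x₁ x₂ x₃, polar Q₁ x₁ (m₁ x₂ x₃) = polar Q₃ x₃ (m₃ x₁ x₂)) :
    ∀ (x₂ : V₂) (x₃ : V₃), Q₁ (m₁ x₂ x₃) = Q₂ x₂ * Q₃ x₃ := by
  intro x₂ x₃
  -- trivial case: Q₂ identically zero forces V₂ = 0
  by_cases hQ2 : ∀ y, Q₂ y = 0
  · have hz : x₂ = 0 := h₂ x₂ (fun z => by simp [polar, hQ2])
    subst hz
    simp
  push_neg at hQ2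
  obtain ⟨y₂, hy₂⟩ := hQ2
  -- linearization in the first variable
  have hA : ∀ (x z : V₁) (w : V₂),
      polar Q₃ (m₃ x w) (m₃ z w) = polar Q₁ x z * Q₂ w := by
    intro x z w
    have h := hcomp (x + z) w
    simp only [map_add, LinearMap.add_apply] at h
    simp only [polar]
    rw [h, hcomp, hcomp]
    ring
  -- linearization in the second variable
  have hB : ∀ (x : V₁) (w v : V₂),
      polar Q₃ (m₃ x w) (m₃ x v) = Q₁ x * polar Q₂ w v := by
    intro x w v
    have h := hcomp x (w + v)
    rw [map_add] at h
    simp only [polar]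
    rw [h, hcomp, hcomp]
    ring
  -- full linearization
  have hC : ∀ (x z : V₁) (w v : V₂),
      polar Q₃ (m₃ x w) (m₃ z v) + polar Q₃ (m₃ x v) (m₃ z w)
        = polar Q₁ x z * polar Q₂ w v := by
    intro x z w v
    have h := hA x z (w + v)
    simp only [map_add, polar_add_left, polar_add_right] at h
    rw [hA x z w, hA x z v] at h
    have hp : Q₂ (w + v) = Q₂ w + Q₂ v + polar Q₂ w v := by
      simp only [polar]; ring
    rw [hp] at h
    linear_combination h
  -- the map x ↦ m₃ x y₂ is bijective
  have hinj : Function.Injective (m₃.flip y₂) := by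
    intro a b hab
    have : a - b = 0 := by
      apply h₁
      intro z
      have h := hA (a - b) z y₂
      have hz : m₃ (a - b) y₂ = 0 := by
        simp only [LinearMap.flip_apply] at hab
        rw [_root_.map_sub, LinearMap.sub_apply, hab, sub_self]
      rw [hz, polar_zero_left] at h
      have := h.symm
      rcases mul_eq_zero.mp this with h' | h'
      · exact h'
      · exact absurd h' hy₂
    rwa [sub_eq_zero] at this
  have hsurj : Function.Surjective (m₃.flip y₂) :=
    (LinearMap.injective_iff_surjective_of_finrank_eq_finrank
      (hd₁₂.trans hd₂₃)).mp hinj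
  -- the key identity m₁ y₂ (m₃ w y₂) = Q₂ y₂ • w
  have hstar : ∀ w : V₁, m₁ y₂ (m₃ w y₂) = Q₂ y₂ • w := by
    intro w
    have key : ∀ z, polar Q₁ (m₁ y₂ (m₃ w y₂) - Q₂ y₂ • w) z = 0 := by
      intro z
      rw [polar_sub_left, polar_smul_left, polar_comm Q₁ (m₁ y₂ (m₃ w y₂)) z,
        hadj₁, hA w z y₂, polar_comm Q₁ w z, smul_eq_mul]
      ring
    have := h₁ _ key
    rwa [sub_eq_zero] at this
  -- composition property for m₁ at y₂
  have hstarQ : ∀ v : V₃, Q₁ (m₁ y₂ v) = Q₂ y₂ * Q₃ v := by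
    intro v
    obtain ⟨w, hw⟩ := hsurj v
    simp only [LinearMap.flip_apply] at hw
    rw [← hw, hstar w, QuadraticMap.map_smul, hcomp, smul_eq_mul]
    ring
  -- main computation
  obtain ⟨x₁, hx₁⟩ := hsurj x₃
  simp only [LinearMap.flip_apply] at hx₁
  set c := polar Q₂ x₂ y₂ with hc
  set u := m₁ y₂ (m₃ x₁ x₂) with hu_def
  have hD : m₁ x₂ x₃ = c • x₁ - u := by
    have key : ∀ z, polar Q₁ (m₁ x₂ x₃ - (c • x₁ - u)) z = 0 := by
      intro z
      have e1 : polar Q₁ (m₁ x₂ x₃) z = polar Q₃ x₃ (m₃ z x₂) := by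
        rw [polar_comm, hadj₁]
      have e2 : polar Q₁ u z = polar Q₃ (m₃ x₁ x₂) (m₃ z y₂) := by
        rw [polar_comm, hadj₁]
      have e3 := hC x₁ z x₂ y₂
      rw [polar_sub_left, polar_sub_left, polar_smul_left, e1, e2, ← hx₁,
        smul_eq_mul]
      rw [polar_comm Q₁ x₁ z] at e3
      linear_combination e3 - c * polar_comm Q₁ x₁ z
    have := h₁ _ key
    rwa [sub_eq_zero] at this
  have hu : Q₁ u = Q₂ y₂ * (Q₁ x₁ * Q₂ x₂) := by
    rw [hu_def, hstarQ, hcomp]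
  have hb : polar Q₁ x₁ u = Q₁ x₁ * c := by
    rw [hu_def, hadj₁, hB]
  have expand : Q₁ (c • x₁ - u) = Q₁ (c • x₁) + Q₁ u - polar Q₁ (c • x₁) u := by
    have h := polar_neg_right Q₁ (c • x₁) u
    simp only [polar, ← sub_eq_add_neg, QuadraticMap.map_neg] at h
    have hp : polar Q₁ (c • x₁) u = Q₁ (c • x₁ + u) - Q₁ (c • x₁) - Q₁ u := rfl
    linear_combination h + hp
  rw [hD, expand, QuadraticMap.map_smul, polar_smul_left, hb, hu, ← hx₁, hcomp,
    smul_eq_mul, smul_eq_mul]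
  ring
end

section
/- Let *₃ : V₁ × V₂ → V₃ be a composition map between quadratic spaces of equal finite dimension with nonsingular polar forms, with derived maps *₁ and *₂. Then for all x₁, y₁ ∈ V₁, x₂ ∈ V₂: (x₁ *₃ x₂) *₂ y₁ + (y₁ *₃ x₂) *₂ x₁ = b₁(x₁, y₁)·x₂. -/
open QuadraticMap Module

/-- For a composition map `*₃ : V₁ × V₂ → V₃` with derived map
`*₂ : V₃ × V₁ → V₂`, one has the linearized identity
`(x₁ *₃ x₂) *₂ y₁ + (y₁ *₃ x₂) *₂ x₁ = b₁(x₁, y₁) • x₂`. -/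
theorem statement4 {F V₁ V₂ V₃ : Type*} [Field F]
    [AddCommGroup V₁] [Module F V₁] [AddCommGroup V₂] [Module F V₂]
    [AddCommGroup V₃] [Module F V₃]
    [FiniteDimensional F V₁] [FiniteDimensional F V₂] [FiniteDimensional F V₃]
    (Q₁ : QuadraticForm F V₁) (Q₂ : QuadraticForm F V₂) (Q₃ : QuadraticForm F V₃)
    (h₁ : ∀ x : V₁, (∀ y, polar Q₁ x y = 0) → x = 0)
    (h₂ : ∀ x : V₂, (∀ y, polar Q₂ x y = 0) → x = 0)
    (h₃ : ∀ x : V₃, (∀ y, polar Q₃ x y = 0) → x = 0)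
    (hd₁₂ : finrank F V₁ = finrank F V₂) (hd₂₃ : finrank F V₂ = finrank F V₃)
    (m₃ : V₁ →ₗ[F] V₂ →ₗ[F] V₃)
    (hcomp : ∀ x₁ x₂, Q₃ (m₃ x₁ x₂) = Q₁ x₁ * Q₂ x₂)
    (m₁ : V₂ →ₗ[F] V₃ →ₗ[F] V₁)
    (hadj₁ : ∀ x₁ x₂ x₃, polar Q₁ x₁ (m₁ x₂ x₃) = polar Q₃ x₃ (m₃ x₁ x₂))
    (m₂ : V₃ →ₗ[F] V₁ →ₗ[F] V₂)
    (hadj₂ : ∀ x₁ x₂ x₃, polar Q₂ x₂ (m₂ x₃ x₁) = polar Q₃ x₃ (m₃ x₁ x₂)) :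
    ∀ (x₁ y₁ : V₁) (x₂ : V₂),
      m₂ (m₃ x₁ x₂) y₁ + m₂ (m₃ y₁ x₂) x₁ = polar Q₁ x₁ y₁ • x₂ := by
  intro x₁ y₁ x₂
  have key1 : ∀ (x y : V₁) (z : V₂),
      polar Q₃ (m₃ x z) (m₃ y z) = polar Q₁ x y * Q₂ z := by
    intro x y z
    have e : m₃ x z + m₃ y z = m₃ (x + y) z := by simp
    simp only [polar, e, hcomp]
    ring
  have key2 : ∀ (x y : V₁) (z w : V₂),
      polar Q₃ (m₃ x z) (m₃ y w) + polar Q₃ (m₃ x w) (m₃ y z)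
        = polar Q₁ x y * polar Q₂ z w := by
    intro x y z w
    have h := key1 x y (z + w)
    simp only [map_add, polar_add_left, polar_add_right, key1] at h
    rw [QuadraticMap.map_add Q₂ z w] at h
    linear_combination h
  have hz : m₂ (m₃ x₁ x₂) y₁ + m₂ (m₃ y₁ x₂) x₁ - polar Q₁ x₁ y₁ • x₂ = 0 := by
    apply h₂
    intro y
    rw [polar_sub_left, polar_add_left, polar_smul_left]
    rw [polar_comm Q₂ (m₂ (m₃ x₁ x₂) y₁) y, hadj₂ y₁ y (m₃ x₁ x₂)]
    rw [polar_comm Q₂ (m₂ (m₃ y₁ x₂) x₁) y, hadj₂ x₁ y (m₃ y₁ x₂)]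
    rw [polar_comm Q₃ (m₃ y₁ x₂) (m₃ x₁ y), smul_eq_mul]
    linear_combination key2 x₁ y₁ x₂ y
  exact sub_eq_zero.mp hz
end

section
/- Let C = ((V₁,q₁),(V₂,q₂),(V₃,q₃),*₃) be a composition of quadratic spaces of dimension 2 over a field F. Then there exist a 1-fold Pfister (norm) form n and scalars λ₁, λ₂, λ₃ ∈ F× with λ₁λ₂λ₃ = 1 such that qᵢ ≅ ⟨λᵢ⟩·n for i = 1, 2, 3. -/
open QuadraticMap Module

/-- A quadratic form is the norm form of a unital composition algebra.  In dimension 2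
(with nonsingular polar form) this characterizes 1-fold quadratic Pfister forms, i.e.
norm forms of quadratic étale algebras, in every characteristic. -/
def IsPfister {F V : Type*} [Field F] [AddCommGroup V] [Module F V]
    (Q : QuadraticForm F V) : Prop :=
  ∃ (mul : V →ₗ[F] V →ₗ[F] V) (e : V), Q e = 1 ∧
    (∀ x, mul e x = x) ∧ (∀ x, mul x e = x) ∧ ∀ x y, Q (mul x y) = Q x * Q y

private lemma exists_aniso {F V : Type*} [Field F] [AddCommGroup V] [Module F V]
    [FiniteDimensional F V] (Q : QuadraticForm F V)
    (h : ∀ x : V, (∀ y, polar Q x y = 0) → x = 0) (hd : finrank F V = 2) :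
    ∃ v, Q v ≠ 0 := by
  by_contra hc
  push_neg at hc
  have hz : ∀ x : V, x = 0 := fun x => h x fun y => by
    simp [QuadraticMap.polar, hc]
  have : Subsingleton V := ⟨fun a b => by rw [hz a, hz b]⟩
  rw [finrank_zero_of_subsingleton] at hd
  norm_num at hd

/-- For a composition of quadratic spaces of dimension 2, there exist a
1-fold Pfister (norm) form `n` and scalars `λ₁, λ₂, λ₃ ∈ F×` with `λ₁λ₂λ₃ = 1` such that
`qᵢ ≅ ⟨λᵢ⟩·n` for `i = 1, 2, 3`. -/
theorem statement8 {F V₁ V₂ V₃ : Type*} [Field F]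
    [AddCommGroup V₁] [Module F V₁] [AddCommGroup V₂] [Module F V₂]
    [AddCommGroup V₃] [Module F V₃]
    [FiniteDimensional F V₁] [FiniteDimensional F V₂] [FiniteDimensional F V₃]
    (Q₁ : QuadraticForm F V₁) (Q₂ : QuadraticForm F V₂) (Q₃ : QuadraticForm F V₃)
    (h₁ : ∀ x : V₁, (∀ y, polar Q₁ x y = 0) → x = 0)
    (h₂ : ∀ x : V₂, (∀ y, polar Q₂ x y = 0) → x = 0)
    (h₃ : ∀ x : V₃, (∀ y, polar Q₃ x y = 0) → x = 0)
    (hd₁ : finrank F V₁ = 2) (hd₂ : finrank F V₂ = 2) (hd₃ : finrank F V₃ = 2)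
    (m₃ : V₁ →ₗ[F] V₂ →ₗ[F] V₃)
    (hcomp : ∀ x₁ x₂, Q₃ (m₃ x₁ x₂) = Q₁ x₁ * Q₂ x₂) :
    ∃ (n : QuadraticForm F V₁) (lam₁ lam₂ lam₃ : Fˣ),
      IsPfister n ∧ lam₁ * lam₂ * lam₃ = 1 ∧
      QuadraticMap.Equivalent Q₁ ((lam₁ : F) • n) ∧
      QuadraticMap.Equivalent Q₂ ((lam₂ : F) • n) ∧
      QuadraticMap.Equivalent Q₃ ((lam₃ : F) • n) := by
  classical
  obtain ⟨y₁, ha⟩ := exists_aniso Q₁ h₁ hd₁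
  obtain ⟨y₂, hb⟩ := exists_aniso Q₂ h₂ hd₂
  set a : F := Q₁ y₁ with ha_def
  set b : F := Q₂ y₂ with hb_def
  set f : V₁ →ₗ[F] V₃ := m₃.flip y₂ with hf_def
  set g : V₂ →ₗ[F] V₃ := m₃ y₁ with hg_def
  have hfapp : ∀ x, f x = m₃ x y₂ := fun _ => rfl
  have hgapp : ∀ y, g y = m₃ y₁ y := fun _ => rfl
  have hQf : ∀ x, Q₃ (f x) = Q₁ x * b := fun x => by rw [hfapp, hcomp]
  have hQg : ∀ y, Q₃ (g y) = a * Q₂ y := fun y => by rw [hgapp, hcomp]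
  -- injectivity of f and g
  have hfinj : Function.Injective f := by
    rw [← LinearMap.ker_eq_bot, LinearMap.ker_eq_bot']
    intro x hx
    refine h₁ x fun x' => ?_
    have hp : polar Q₃ (f x) (f x') = polar Q₁ x x' * b := by
      simp only [QuadraticMap.polar, ← map_add, hQf]
      ring
    rw [hx, polar_zero_left] at hp
    exact (mul_eq_zero.mp hp.symm).resolve_right hb
  have hginj : Function.Injective g := by
    rw [← LinearMap.ker_eq_bot, LinearMap.ker_eq_bot']
    intro y hy
    refine h₂ y fun y' => ?_
    have hp : polar Q₃ (g y) (g y') = a * polar Q₂ y y' := by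
      simp only [QuadraticMap.polar, ← map_add, hQg]
      ring
    rw [hy, polar_zero_left] at hp
    exact (mul_eq_zero.mp hp.symm).resolve_left ha
  have hfbij : Function.Bijective f :=
    ⟨hfinj, (LinearMap.injective_iff_surjective_of_finrank_eq_finrank
      (by rw [hd₁, hd₃])).mp hfinj⟩
  have hgbij : Function.Bijective g :=
    ⟨hginj, (LinearMap.injective_iff_surjective_of_finrank_eq_finrank
      (by rw [hd₂, hd₃])).mp hginj⟩
  set fe : V₁ ≃ₗ[F] V₃ := LinearEquiv.ofBijective f hfbij with hfe_def
  set ge : V₂ ≃ₗ[F] V₃ := LinearEquiv.ofBijective g hgbij with hge_def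
  have hfe : ∀ x, fe x = f x := fun _ => rfl
  have hge : ∀ y, ge y = g y := fun _ => rfl
  have hQfe : ∀ x, Q₃ (fe x) = Q₁ x * b := hQf
  have hQge : ∀ y, Q₃ (ge y) = a * Q₂ y := hQg
  have hQfsymm : ∀ z, Q₁ (fe.symm z) = b⁻¹ * Q₃ z := by
    intro z
    have h := hQfe (fe.symm z)
    rw [fe.apply_symm_apply] at h
    rw [h]; field_simp
  have hQgsymm : ∀ z, Q₂ (ge.symm z) = a⁻¹ * Q₃ z := by
    intro z
    have h := hQge (ge.symm z)
    rw [ge.apply_symm_apply] at h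
    rw [h]; field_simp
  -- the norm form
  set n : QuadraticForm F V₁ := a⁻¹ • Q₁ with hn_def
  have hnapp : ∀ x, n x = a⁻¹ * Q₁ x := fun x => by
    rw [hn_def, QuadraticMap.smul_apply, smul_eq_mul]
  -- the multiplication
  set T : V₁ →ₗ[F] V₂ := (fe ≪≫ₗ ge.symm).toLinearMap with hT_def
  have hTapp : ∀ x, T x = ge.symm (fe x) := fun _ => rfl
  set mul : V₁ →ₗ[F] V₁ →ₗ[F] V₁ :=
    (m₃.compl₂ T).compr₂ fe.symm.toLinearMap with hmul_def
  have hmulapp : ∀ x x', mul x x' = fe.symm (m₃ x (ge.symm (fe x'))) := fun _ _ => rfl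
  have hPf : IsPfister n := by
    refine ⟨mul, y₁, ?_, ?_, ?_, ?_⟩
    · rw [hnapp]; exact inv_mul_cancel₀ ha
    · intro x
      rw [hmulapp]
      show fe.symm (g (ge.symm (fe x))) = x
      rw [← hge, ge.apply_symm_apply, fe.symm_apply_apply]
    · intro x
      have hy : ge.symm (fe y₁) = y₂ := by
        have : fe y₁ = ge y₂ := rfl
        rw [this, ge.symm_apply_apply]
      rw [hmulapp, hy]
      show fe.symm (fe x) = x
      exact fe.symm_apply_apply x
    · intro x x'
      rw [hmulapp, hnapp, hnapp, hnapp, hQfsymm, hcomp, hQgsymm, hQfe]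
      field_simp
  refine ⟨n, Units.mk0 a ha, Units.mk0 b hb, (Units.mk0 a ha * Units.mk0 b hb)⁻¹,
    hPf, by group, ?_, ?_, ?_⟩
  · refine ⟨{ LinearEquiv.refl F V₁ with map_app' := fun x => ?_ }⟩
    show ((a : F) • n) x = Q₁ x
    rw [QuadraticMap.smul_apply, hnapp, smul_eq_mul]
    field_simp
  · refine ⟨{ (ge ≪≫ₗ fe.symm) with map_app' := fun y => ?_ }⟩
    show ((b : F) • n) (fe.symm (ge y)) = Q₂ y
    rw [QuadraticMap.smul_apply, hnapp, smul_eq_mul, hQfsymm, hQge]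
    field_simp
  · have hab : (a * b : F) ≠ 0 := mul_ne_zero ha hb
    refine ⟨{ (fe.symm ≪≫ₗ LinearEquiv.smulOfNeZero F V₁ (a * b) hab) with
      map_app' := fun z => ?_ }⟩
    show (((Units.mk0 a ha * Units.mk0 b hb)⁻¹ : Fˣ) : F) • n ((a * b) • fe.symm z) = Q₃ z
    rw [QuadraticMap.map_smul, hnapp, smul_eq_mul, smul_eq_mul, hQfsymm]
    have : (((Units.mk0 a ha * Units.mk0 b hb)⁻¹ : Fˣ) : F) = (a * b)⁻¹ := by
      simp
    rw [this]
    field_simp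
end

section
/- Every composition of quadratic spaces over a field F is similar to a composition of isometric quadratic spaces. Concretely, if C = ((V₁,q₁),(V₂,q₂),(V₃,q₃),*₃) is a composition, choose λ₁ represented by q₁ and λ₂ represented by q₂, set λ₃ = (λ₁λ₂)⁻¹, q̃ᵢ = λᵢ⁻¹qᵢ and x₁ *̃₃ x₂ = λ₃·(x₁ *₃ x₂); then C̃ = ((V₁,q̃₁),(V₂,q̃₂),(V₃,q̃₃),*̃₃) is a composition, (Id,Id,Id) : C → C̃ is a similitude with composition multiplier (λ₁,λ₂,λ₃), and q̃₁, q̃₂, q̃₃ are isometric Pfister forms. -/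
/-!
Pick `a₁` with `q₁ a₁ = λ₁` and `a₂` with `q₂ a₂ = λ₂`. After rescaling, `q̃₁ a₁ = q̃₂ a₂ = 1`,
so `L = a₁ *̃₃ -` and `R = - *̃₃ a₂` are isometric maps `q̃₂ → q̃₃` and `q̃₁ → q̃₃`,
injective by nondegeneracy and hence bijective, as the dimensions agree. Kaplansky's trick
`x ⋄ y = (R⁻¹ x) *̃₃ (L⁻¹ y)` makes `q̃₃` the norm of a unital composition algebra with unit
`a₁ *̃₃ a₂`, and `L`, `R` carry this structure over to `q̃₂` and `q̃₁`.
-/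

open QuadraticMap Module

namespace QuadraticMap

variable {F V W : Type*} [Field F] [AddCommGroup V] [Module F V] [AddCommGroup W] [Module F W]

theorem polar_inv_smul_smul_right (Q : QuadraticForm F V) {c : F} (hc : c ≠ 0) (x y : V) :
    polar (c⁻¹ • Q) x (c • y) = polar Q x y := by
  rw [FunLike.coe_smul, polar_smul, polar_smul_right, smul_eq_mul, smul_eq_mul,
    inv_mul_cancel_left₀ hc]

theorem separatingLeft_smul {Q : QuadraticForm F V} {c : F} (hc : c ≠ 0)
    (hQ : ∀ x, (∀ y, polar Q x y = 0) → x = 0) :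
    ∀ x, (∀ y, polar (c • Q) x y = 0) → x = 0 := fun x hx =>
  hQ x fun y => by simpa [FunLike.coe_smul, polar_smul, hc] using hx y

theorem injective_of_map_app_eq {Q : QuadraticForm F V} {Q' : QuadraticForm F W}
    (hQ : ∀ x, (∀ y, polar Q x y = 0) → x = 0) {f : V →ₗ[F] W} (hf : ∀ x, Q' (f x) = Q x) :
    Function.Injective f := by
  refine (injective_iff_map_eq_zero f).2 fun x hx => hQ x fun y => ?_
  rw [polar, ← hf, ← hf, ← hf, map_add, hx, zero_add, map_zero, sub_zero, sub_self]

noncomputable def isometryEquivOfFinrankEq [FiniteDimensional F V] [FiniteDimensional F W]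
    {Q : QuadraticForm F V} {Q' : QuadraticForm F W}
    (hQ : ∀ x, (∀ y, polar Q x y = 0) → x = 0) (f : V →ₗ[F] W) (hf : ∀ x, Q' (f x) = Q x)
    (hd : finrank F V = finrank F W) : Q.IsometryEquiv Q' :=
  { f.linearEquivOfInjective (injective_of_map_app_eq hQ hf) hd with
    map_app' := hf }

end QuadraticMap

theorem IsPfister.of_equivalent {F V W : Type*} [Field F] [AddCommGroup V] [Module F V]
    [AddCommGroup W] [Module F W] {Q : QuadraticForm F V} {Q' : QuadraticForm F W}
    (hQ : IsPfister Q) (h : Q.Equivalent Q') : IsPfister Q' := by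
  obtain ⟨g⟩ := h
  obtain ⟨mul, e, he, hel, her, hmul⟩ := hQ
  refine ⟨(mul.compl₁₂ g.symm.toLinearEquiv.toLinearMap g.symm.toLinearEquiv.toLinearMap).compr₂
    g.toLinearEquiv.toLinearMap, g e, by simpa using he, fun x => ?_, fun x => ?_,
    fun x y => ?_⟩ <;> simp [hel, her, hmul]

section Composition

variable {F V₁ V₂ V₃ : Type*} [Field F] [AddCommGroup V₁] [Module F V₁]
  [AddCommGroup V₂] [Module F V₂] [AddCommGroup V₃] [Module F V₃]
  {Q₁ : QuadraticForm F V₁} {Q₂ : QuadraticForm F V₂} {Q₃ : QuadraticForm F V₃}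
  {m : V₁ →ₗ[F] V₂ →ₗ[F] V₃}

theorem composition_smul (hm : ∀ x₁ x₂, Q₃ (m x₁ x₂) = Q₁ x₁ * Q₂ x₂) {c₁ c₂ c₃ : F}
    (hc₁ : c₁ ≠ 0) (hc₂ : c₂ ≠ 0) (hc : c₁ * c₂ * c₃ = 1) (x₁ : V₁) (x₂ : V₂) :
    (c₃⁻¹ • Q₃) ((c₃ • m) x₁ x₂) = (c₁⁻¹ • Q₁) x₁ * (c₂⁻¹ • Q₂) x₂ := by
  have hc₃ : c₃ = (c₁ * c₂)⁻¹ := eq_inv_of_mul_eq_one_right hc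
  simp only [smul_apply, LinearMap.smul_apply, QuadraticMap.map_smul, hm, hc₃, smul_eq_mul]
  field_simp

theorem isPfister_of_composition (hm : ∀ x₁ x₂, Q₃ (m x₁ x₂) = Q₁ x₁ * Q₂ x₂)
    {e₁ : V₁} {e₂ : V₂} (he₁ : Q₁ e₁ = 1)
    (L : Q₂.IsometryEquiv Q₃) (hL : ∀ x₂, L x₂ = m e₁ x₂)
    (R : Q₁.IsometryEquiv Q₃) (hR : ∀ x₁, R x₁ = m x₁ e₂) : IsPfister Q₃ := by
  have hRe : R.symm (m e₁ e₂) = e₁ := by rw [R.symm_apply_eq, hR]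
  have hLe : L.symm (m e₁ e₂) = e₂ := by rw [L.symm_apply_eq, hL]
  refine ⟨m.compl₁₂ R.symm.toLinearEquiv.toLinearMap L.symm.toLinearEquiv.toLinearMap,
    m e₁ e₂, by rw [← hR, R.map_app, he₁], fun x => ?_, fun x => ?_, fun x y => ?_⟩
  · change m (R.symm (m e₁ e₂)) (L.symm x) = x
    rw [hRe, ← hL, L.apply_symm_apply]
  · change m (R.symm x) (L.symm (m e₁ e₂)) = x
    rw [hLe, ← hR, R.apply_symm_apply]
  · change Q₃ (m (R.symm x) (L.symm y)) = Q₃ x * Q₃ y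
    rw [hm, R.symm.map_app, L.symm.map_app]

end Composition

theorem statement10_general {F V₁ V₂ V₃ : Type*} [Field F]
    [AddCommGroup V₁] [Module F V₁] [AddCommGroup V₂] [Module F V₂]
    [AddCommGroup V₃] [Module F V₃]
    [FiniteDimensional F V₁] [FiniteDimensional F V₂] [FiniteDimensional F V₃]
    (Q₁ : QuadraticForm F V₁) (Q₂ : QuadraticForm F V₂) (Q₃ : QuadraticForm F V₃)
    (h₁ : ∀ x : V₁, (∀ y, polar Q₁ x y = 0) → x = 0)
    (h₂ : ∀ x : V₂, (∀ y, polar Q₂ x y = 0) → x = 0)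
    (hd₁₂ : finrank F V₁ = finrank F V₂) (hd₂₃ : finrank F V₂ = finrank F V₃)
    (m₃ : V₁ →ₗ[F] V₂ →ₗ[F] V₃)
    (hcomp : ∀ x₁ x₂, Q₃ (m₃ x₁ x₂) = Q₁ x₁ * Q₂ x₂)
    (m₁ : V₂ →ₗ[F] V₃ →ₗ[F] V₁)
    (hadj₁ : ∀ x₁ x₂ x₃, polar Q₁ x₁ (m₁ x₂ x₃) = polar Q₃ x₃ (m₃ x₁ x₂))
    (m₂ : V₃ →ₗ[F] V₁ →ₗ[F] V₂)
    (hadj₂ : ∀ x₁ x₂ x₃, polar Q₂ x₂ (m₂ x₃ x₁) = polar Q₃ x₃ (m₃ x₁ x₂))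
    -- scalars represented by q₁ and q₂, and λ₃ = (λ₁ λ₂)⁻¹
    (lam₁ lam₂ lam₃ : Fˣ)
    (hr₁ : ∃ x₁, Q₁ x₁ = (lam₁ : F)) (hr₂ : ∃ x₂, Q₂ x₂ = (lam₂ : F))
    (hlam : lam₁ * lam₂ * lam₃ = 1)
    -- the rescaled forms and multiplication maps
    (Q₁' : QuadraticForm F V₁) (hQ₁' : Q₁' = ((lam₁ : F))⁻¹ • Q₁)
    (Q₂' : QuadraticForm F V₂) (hQ₂' : Q₂' = ((lam₂ : F))⁻¹ • Q₂)
    (Q₃' : QuadraticForm F V₃) (hQ₃' : Q₃' = ((lam₃ : F))⁻¹ • Q₃)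
    (m₃' : V₁ →ₗ[F] V₂ →ₗ[F] V₃) (hm₃' : m₃' = (lam₃ : F) • m₃)
    (m₁' : V₂ →ₗ[F] V₃ →ₗ[F] V₁) (hm₁' : m₁' = (lam₁ : F) • m₁)
    (m₂' : V₃ →ₗ[F] V₁ →ₗ[F] V₂) (hm₂' : m₂' = (lam₂ : F) • m₂) :
    -- C̃ is a composition of quadratic spaces
    (∀ x₁ x₂, Q₃' (m₃' x₁ x₂) = Q₁' x₁ * Q₂' x₂) ∧
    -- with derived maps m₁' and m₂'
    (∀ x₁ x₂ x₃, polar Q₁' x₁ (m₁' x₂ x₃) = polar Q₃' x₃ (m₃' x₁ x₂)) ∧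
    (∀ x₁ x₂ x₃, polar Q₂' x₂ (m₂' x₃ x₁) = polar Q₃' x₃ (m₃' x₁ x₂)) ∧
    -- (Id, Id, Id) : C → C̃ is a similitude, with component multipliers λᵢ⁻¹ ...
    (∀ x₁, Q₁' x₁ = ((lam₁ : F))⁻¹ * Q₁ x₁) ∧
    (∀ x₂, Q₂' x₂ = ((lam₂ : F))⁻¹ * Q₂ x₂) ∧
    (∀ x₃, Q₃' x₃ = ((lam₃ : F))⁻¹ * Q₃ x₃) ∧
    -- ... and composition multiplier (λ₁, λ₂, λ₃)
    (∀ x₁ x₂, (lam₃ : F) • m₃ x₁ x₂ = m₃' x₁ x₂) ∧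
    (∀ x₂ x₃, (lam₁ : F) • m₁ x₂ x₃ = m₁' x₂ x₃) ∧
    (∀ x₃ x₁, (lam₂ : F) • m₂ x₃ x₁ = m₂' x₃ x₁) ∧
    -- the rescaled forms are isometric Pfister forms
    QuadraticMap.Equivalent Q₁' Q₂' ∧ QuadraticMap.Equivalent Q₂' Q₃' ∧
    IsPfister Q₁' ∧ IsPfister Q₂' ∧ IsPfister Q₃' := by
  obtain ⟨a₁, ha₁⟩ := hr₁
  obtain ⟨a₂, ha₂⟩ := hr₂
  subst hQ₁' hQ₂' hQ₃' hm₃' hm₁' hm₂'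
  have hlam' : (lam₁ : F) * lam₂ * lam₃ = 1 := by
    simpa only [Units.val_mul, Units.val_one] using congrArg Units.val hlam
  have hcomp' := composition_smul hcomp lam₁.ne_zero lam₂.ne_zero hlam'
  have hunit₁ : ((lam₁ : F)⁻¹ • Q₁) a₁ = 1 := by simp [ha₁]
  have hunit₂ : ((lam₂ : F)⁻¹ • Q₂) a₂ = 1 := by simp [ha₂]
  let L := isometryEquivOfFinrankEq (separatingLeft_smul (inv_ne_zero lam₂.ne_zero) h₂)
    (((lam₃ : F) • m₃) a₁) (fun x₂ => by rw [hcomp', hunit₁, one_mul]) hd₂₃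
  let R := isometryEquivOfFinrankEq (separatingLeft_smul (inv_ne_zero lam₁.ne_zero) h₁)
    (((lam₃ : F) • m₃).flip a₂) (fun x₁ => by rw [LinearMap.flip_apply, hcomp', hunit₂, mul_one])
    (hd₁₂.trans hd₂₃)
  have hPf₃ := isPfister_of_composition hcomp' hunit₁ L (fun _ => rfl) R (fun _ => rfl)
  refine ⟨hcomp', fun x₁ x₂ x₃ => ?_, fun x₁ x₂ x₃ => ?_, fun _ => rfl, fun _ => rfl, fun _ => rfl,
    fun _ _ => rfl, fun _ _ => rfl, fun _ _ => rfl, ⟨R.trans L.symm⟩, ⟨L⟩,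
    hPf₃.of_equivalent ⟨R.symm⟩, hPf₃.of_equivalent ⟨L.symm⟩, hPf₃⟩
  · simp only [LinearMap.smul_apply]
    rw [polar_inv_smul_smul_right _ lam₁.ne_zero, polar_inv_smul_smul_right _ lam₃.ne_zero,
      hadj₁]
  · simp only [LinearMap.smul_apply]
    rw [polar_inv_smul_smul_right _ lam₂.ne_zero, polar_inv_smul_smul_right _ lam₃.ne_zero,
      hadj₂]

/-- Every composition of quadratic spaces is similar to a composition
of isometric quadratic spaces.  Concretely, if `λ₁` is represented by `q₁`, `λ₂` by
`q₂` and `λ₃ = (λ₁λ₂)⁻¹`, then setting `q̃ᵢ = λᵢ⁻¹ qᵢ`, `*̃₃ = λ₃·*₃` (with derived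
maps `*̃₁ = λ₁·*₁`, `*̃₂ = λ₂·*₂`) yields a composition `C̃`, the identity triple is a
similitude `C → C̃` with composition multiplier `(λ₁,λ₂,λ₃)`, and `q̃₁, q̃₂, q̃₃` are
isometric Pfister forms. -/
theorem statement10 {F V₁ V₂ V₃ : Type*} [Field F]
    [AddCommGroup V₁] [Module F V₁] [AddCommGroup V₂] [Module F V₂]
    [AddCommGroup V₃] [Module F V₃]
    [FiniteDimensional F V₁] [FiniteDimensional F V₂] [FiniteDimensional F V₃]
    (Q₁ : QuadraticForm F V₁) (Q₂ : QuadraticForm F V₂) (Q₃ : QuadraticForm F V₃)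
    (h₁ : ∀ x : V₁, (∀ y, polar Q₁ x y = 0) → x = 0)
    (h₂ : ∀ x : V₂, (∀ y, polar Q₂ x y = 0) → x = 0)
    (h₃ : ∀ x : V₃, (∀ y, polar Q₃ x y = 0) → x = 0)
    (hd₁₂ : finrank F V₁ = finrank F V₂) (hd₂₃ : finrank F V₂ = finrank F V₃)
    (m₃ : V₁ →ₗ[F] V₂ →ₗ[F] V₃)
    (hcomp : ∀ x₁ x₂, Q₃ (m₃ x₁ x₂) = Q₁ x₁ * Q₂ x₂)
    (m₁ : V₂ →ₗ[F] V₃ →ₗ[F] V₁)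
    (hadj₁ : ∀ x₁ x₂ x₃, polar Q₁ x₁ (m₁ x₂ x₃) = polar Q₃ x₃ (m₃ x₁ x₂))
    (m₂ : V₃ →ₗ[F] V₁ →ₗ[F] V₂)
    (hadj₂ : ∀ x₁ x₂ x₃, polar Q₂ x₂ (m₂ x₃ x₁) = polar Q₃ x₃ (m₃ x₁ x₂))
    -- scalars represented by q₁ and q₂, and λ₃ = (λ₁ λ₂)⁻¹
    (lam₁ lam₂ lam₃ : Fˣ)
    (hr₁ : ∃ x₁, Q₁ x₁ = (lam₁ : F)) (hr₂ : ∃ x₂, Q₂ x₂ = (lam₂ : F))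
    (hlam : lam₁ * lam₂ * lam₃ = 1)
    -- the rescaled forms and multiplication maps
    (Q₁' : QuadraticForm F V₁) (hQ₁' : Q₁' = ((lam₁ : F))⁻¹ • Q₁)
    (Q₂' : QuadraticForm F V₂) (hQ₂' : Q₂' = ((lam₂ : F))⁻¹ • Q₂)
    (Q₃' : QuadraticForm F V₃) (hQ₃' : Q₃' = ((lam₃ : F))⁻¹ • Q₃)
    (m₃' : V₁ →ₗ[F] V₂ →ₗ[F] V₃) (hm₃' : m₃' = (lam₃ : F) • m₃)
    (m₁' : V₂ →ₗ[F] V₃ →ₗ[F] V₁) (hm₁' : m₁' = (lam₁ : F) • m₁)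
    (m₂' : V₃ →ₗ[F] V₁ →ₗ[F] V₂) (hm₂' : m₂' = (lam₂ : F) • m₂) :
    -- C̃ is a composition of quadratic spaces
    (∀ x₁ x₂, Q₃' (m₃' x₁ x₂) = Q₁' x₁ * Q₂' x₂) ∧
    -- with derived maps m₁' and m₂'
    (∀ x₁ x₂ x₃, polar Q₁' x₁ (m₁' x₂ x₃) = polar Q₃' x₃ (m₃' x₁ x₂)) ∧
    (∀ x₁ x₂ x₃, polar Q₂' x₂ (m₂' x₃ x₁) = polar Q₃' x₃ (m₃' x₁ x₂)) ∧
    -- (Id, Id, Id) : C → C̃ is a similitude, with component multipliers λᵢ⁻¹ ...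
    (∀ x₁, Q₁' x₁ = ((lam₁ : F))⁻¹ * Q₁ x₁) ∧
    (∀ x₂, Q₂' x₂ = ((lam₂ : F))⁻¹ * Q₂ x₂) ∧
    (∀ x₃, Q₃' x₃ = ((lam₃ : F))⁻¹ * Q₃ x₃) ∧
    -- ... and composition multiplier (λ₁, λ₂, λ₃)
    (∀ x₁ x₂, (lam₃ : F) • m₃ x₁ x₂ = m₃' x₁ x₂) ∧
    (∀ x₂ x₃, (lam₁ : F) • m₁ x₂ x₃ = m₁' x₂ x₃) ∧
    (∀ x₃ x₁, (lam₂ : F) • m₂ x₃ x₁ = m₂' x₃ x₁) ∧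
    -- the rescaled forms are isometric Pfister forms
    QuadraticMap.Equivalent Q₁' Q₂' ∧ QuadraticMap.Equivalent Q₂' Q₃' ∧
    IsPfister Q₁' ∧ IsPfister Q₂' ∧ IsPfister Q₃' :=
  statement10_general Q₁ Q₂ Q₃ h₁ h₂ hd₁₂ hd₂₃ m₃ hcomp m₁ hadj₁ m₂ hadj₂ lam₁ lam₂ lam₃ hr₁ hr₂
    hlam Q₁' hQ₁' Q₂' hQ₂' Q₃' hQ₃' m₃' hm₃' m₁' hm₁' m₂' hm₂'
end

section
/- Let C• = ((V₁,q₁,e₁),(V₂,q₂,e₂),(V₃,q₃,e₃),*₃) be a composition of pointed quadratic spaces, with conjugation x̄ = e·b(e,x) − x on each pointed space. Then for all x₁ ∈ V₁ and x₂ ∈ V₂: conj(e₁ *₃ x₂) = e₁ *₃ conj(x₂) and conj(x₁ *₃ e₂) = conj(x₁) *₃ e₂. -/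
open QuadraticMap Module

/-- In a composition of pointed quadratic spaces, with conjugation
`x̄ = b(e,x)·e − x` on each pointed space, one has
`conj(e₁ *₃ x₂) = e₁ *₃ conj(x₂)` and `conj(x₁ *₃ e₂) = conj(x₁) *₃ e₂`. -/
theorem statement12 {F V₁ V₂ V₃ : Type*} [Field F]
    [AddCommGroup V₁] [Module F V₁] [AddCommGroup V₂] [Module F V₂]
    [AddCommGroup V₃] [Module F V₃]
    [FiniteDimensional F V₁] [FiniteDimensional F V₂] [FiniteDimensional F V₃]
    (Q₁ : QuadraticForm F V₁) (Q₂ : QuadraticForm F V₂) (Q₃ : QuadraticForm F V₃)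
    (h₁ : ∀ x : V₁, (∀ y, polar Q₁ x y = 0) → x = 0)
    (h₂ : ∀ x : V₂, (∀ y, polar Q₂ x y = 0) → x = 0)
    (h₃ : ∀ x : V₃, (∀ y, polar Q₃ x y = 0) → x = 0)
    (hd₁₂ : finrank F V₁ = finrank F V₂) (hd₂₃ : finrank F V₂ = finrank F V₃)
    (m₃ : V₁ →ₗ[F] V₂ →ₗ[F] V₃)
    (hcomp : ∀ x₁ x₂, Q₃ (m₃ x₁ x₂) = Q₁ x₁ * Q₂ x₂)
    (m₁ : V₂ →ₗ[F] V₃ →ₗ[F] V₁)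
    (hadj₁ : ∀ x₁ x₂ x₃, polar Q₁ x₁ (m₁ x₂ x₃) = polar Q₃ x₃ (m₃ x₁ x₂))
    (m₂ : V₃ →ₗ[F] V₁ →ₗ[F] V₂)
    (hadj₂ : ∀ x₁ x₂ x₃, polar Q₂ x₂ (m₂ x₃ x₁) = polar Q₃ x₃ (m₃ x₁ x₂))
    (e₁ : V₁) (e₂ : V₂) (e₃ : V₃)
    (he₁ : Q₁ e₁ = 1) (he₂ : Q₂ e₂ = 1) (he₃ : Q₃ e₃ = 1)
    (hmul : m₃ e₁ e₂ = e₃) :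
    (∀ x₂ : V₂,
      polar Q₃ e₃ (m₃ e₁ x₂) • e₃ - m₃ e₁ x₂ =
        m₃ e₁ (polar Q₂ e₂ x₂ • e₂ - x₂)) ∧
    (∀ x₁ : V₁,
      polar Q₃ e₃ (m₃ x₁ e₂) • e₃ - m₃ x₁ e₂ =
        m₃ (polar Q₁ e₁ x₁ • e₁ - x₁) e₂) := by
  have key₂ : ∀ a b : V₂, polar Q₃ (m₃ e₁ a) (m₃ e₁ b) = polar Q₂ a b := by
    intro a b
    simp only [polar, ← map_add, hcomp, he₁]
    ring
  have key₁ : ∀ a b : V₁, polar Q₃ (m₃ a e₂) (m₃ b e₂) = polar Q₁ a b := by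
    intro a b
    simp only [polar]
    rw [show m₃ a e₂ + m₃ b e₂ = m₃ (a + b) e₂ by rw [map_add]; rfl]
    simp only [hcomp, he₂]
    ring
  constructor
  · intro x₂
    rw [← hmul, key₂ e₂ x₂, LinearMap.map_sub, LinearMap.map_smul, hmul]
  · intro x₁
    rw [← hmul, key₁ e₁ x₁]
    rw [show m₃ (polar Q₁ e₁ x₁ • e₁ - x₁) e₂ = polar Q₁ e₁ x₁ • m₃ e₁ e₂ - m₃ x₁ e₂ by
      rw [LinearMap.map_sub, LinearMap.map_smul]; rfl, hmul]
end

section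
/- Let C• = ((V₁,q₁,e₁),(V₂,q₂,e₂),(V₃,q₃,e₃),*₃) be a composition of pointed quadratic spaces with conjugations denoted by overbars. Then for all x₃ ∈ V₃: e₁ *₃ (e₃ *₂ (e₂ *₁ x₃)) = conj(x₃) and ((x₃ *₂ e₁) *₁ e₃) *₃ e₂ = conj(x₃). -/
open QuadraticMap Module

private theorem surj_aux {F V W : Type*} [Field F] [AddCommGroup V] [Module F V]
    [AddCommGroup W] [Module F W] [FiniteDimensional F V] [FiniteDimensional F W]
    (f : V →ₗ[F] W) (hinj : Function.Injective f)
    (hd : finrank F V = finrank F W) : Function.Surjective f := by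
  rw [← LinearMap.range_eq_top]
  apply Submodule.eq_top_of_finrank_eq
  rw [LinearMap.finrank_range_of_inj hinj, hd]

/-- In a composition of pointed quadratic spaces, for all `x₃ ∈ V₃`:
`e₁ *₃ (e₃ *₂ (e₂ *₁ x₃)) = conj(x₃)` and `((x₃ *₂ e₁) *₁ e₃) *₃ e₂ = conj(x₃)`,
where `conj(x₃) = b₃(e₃,x₃)·e₃ − x₃`. -/
theorem statement13 {F V₁ V₂ V₃ : Type*} [Field F]
    [AddCommGroup V₁] [Module F V₁] [AddCommGroup V₂] [Module F V₂]
    [AddCommGroup V₃] [Module F V₃]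
    [FiniteDimensional F V₁] [FiniteDimensional F V₂] [FiniteDimensional F V₃]
    (Q₁ : QuadraticForm F V₁) (Q₂ : QuadraticForm F V₂) (Q₃ : QuadraticForm F V₃)
    (h₁ : ∀ x : V₁, (∀ y, polar Q₁ x y = 0) → x = 0)
    (h₂ : ∀ x : V₂, (∀ y, polar Q₂ x y = 0) → x = 0)
    (h₃ : ∀ x : V₃, (∀ y, polar Q₃ x y = 0) → x = 0)
    (hd₁₂ : finrank F V₁ = finrank F V₂) (hd₂₃ : finrank F V₂ = finrank F V₃)
    (m₃ : V₁ →ₗ[F] V₂ →ₗ[F] V₃)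
    (hcomp : ∀ x₁ x₂, Q₃ (m₃ x₁ x₂) = Q₁ x₁ * Q₂ x₂)
    (m₁ : V₂ →ₗ[F] V₃ →ₗ[F] V₁)
    (hadj₁ : ∀ x₁ x₂ x₃, polar Q₁ x₁ (m₁ x₂ x₃) = polar Q₃ x₃ (m₃ x₁ x₂))
    (m₂ : V₃ →ₗ[F] V₁ →ₗ[F] V₂)
    (hadj₂ : ∀ x₁ x₂ x₃, polar Q₂ x₂ (m₂ x₃ x₁) = polar Q₃ x₃ (m₃ x₁ x₂))
    (e₁ : V₁) (e₂ : V₂) (e₃ : V₃)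
    (he₁ : Q₁ e₁ = 1) (he₂ : Q₂ e₂ = 1) (he₃ : Q₃ e₃ = 1)
    (hmul : m₃ e₁ e₂ = e₃) :
    ∀ x₃ : V₃,
      m₃ e₁ (m₂ e₃ (m₁ e₂ x₃)) = polar Q₃ e₃ x₃ • e₃ - x₃ ∧
      m₃ (m₁ (m₂ x₃ e₁) e₃) e₂ = polar Q₃ e₃ x₃ • e₃ - x₃ := by
  -- Polarized composition law in the first slot
  have hA : ∀ x₁ y₁ x₂, polar Q₃ (m₃ x₁ x₂) (m₃ y₁ x₂) = polar Q₁ x₁ y₁ * Q₂ x₂ := by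
    intro x₁ y₁ x₂
    have h := hcomp (x₁ + y₁) x₂
    rw [map_add, LinearMap.add_apply] at h
    simp only [polar, hcomp] at h ⊢
    rw [h]; ring
  -- Polarized composition law in the second slot
  have hB : ∀ x₁ x₂ y₂, polar Q₃ (m₃ x₁ x₂) (m₃ x₁ y₂) = Q₁ x₁ * polar Q₂ x₂ y₂ := by
    intro x₁ x₂ y₂
    have h := hcomp x₁ (x₂ + y₂)
    rw [map_add] at h
    simp only [polar, hcomp] at h ⊢
    rw [h]; ring
  -- Fully linearized composition law
  have hStar : ∀ x₁ y₁ x₂ y₂,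
      polar Q₃ (m₃ x₁ x₂) (m₃ y₁ y₂) + polar Q₃ (m₃ x₁ y₂) (m₃ y₁ x₂)
        = polar Q₁ x₁ y₁ * polar Q₂ x₂ y₂ := by
    intro x₁ y₁ x₂ y₂
    have h := hA x₁ y₁ (x₂ + y₂)
    rw [map_add, map_add, polar_add_left, polar_add_right, polar_add_right,
      hA x₁ y₁ x₂, hA x₁ y₁ y₂] at h
    have h2 : Q₂ (x₂ + y₂) = Q₂ x₂ + Q₂ y₂ + polar Q₂ x₂ y₂ := by
      simp only [polar]; ring
    rw [h2] at h
    linear_combination h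
  -- L := m₃ e₁ : V₂ → V₃ is surjective
  have hLsurj : Function.Surjective (m₃ e₁) := by
    apply surj_aux _ _ hd₂₃
    rw [← LinearMap.ker_eq_bot, LinearMap.ker_eq_bot']
    intro x₂ hx
    apply h₂
    intro y₂
    have h := hB e₁ x₂ y₂
    rw [hx, he₁, one_mul] at h
    rw [← h]
    simp [polar]
  -- L' := (· ↦ m₃ · e₂) : V₁ → V₃ is surjective
  have hL'surj : Function.Surjective (m₃.flip e₂) := by
    apply surj_aux _ _ (hd₁₂.trans hd₂₃)
    rw [← LinearMap.ker_eq_bot, LinearMap.ker_eq_bot']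
    intro x₁ hx
    apply h₁
    intro y₁
    have h := hA x₁ y₁ e₂
    rw [LinearMap.flip_apply] at hx
    rw [hx, he₂, mul_one] at h
    rw [← h]
    simp [polar]
  -- m₃ e₁ (m₂ x₃ e₁) = x₃
  have hLR : ∀ x₃, m₃ e₁ (m₂ x₃ e₁) = x₃ := by
    intro x₃
    rw [← sub_eq_zero]
    apply h₃
    intro z
    obtain ⟨y₂, rfl⟩ := hLsurj z
    rw [polar_sub_left, hB, he₁, one_mul, polar_comm Q₂, hadj₂ e₁ y₂ x₃,
      polar_comm Q₃ x₃]
    ring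
  -- m₃ (m₁ e₂ x₃) e₂ = x₃
  have hL'R' : ∀ x₃, m₃ (m₁ e₂ x₃) e₂ = x₃ := by
    intro x₃
    rw [← sub_eq_zero]
    apply h₃
    intro z
    obtain ⟨y₁, rfl⟩ := hL'surj z
    rw [LinearMap.flip_apply, polar_sub_left, hA, he₂, mul_one,
      polar_comm Q₁, hadj₁ y₁ e₂ x₃, polar_comm Q₃ x₃]
    ring
  intro x₃
  constructor
  · -- first identity
    rw [← sub_eq_zero]
    apply h₃
    intro z
    obtain ⟨y₂, rfl⟩ := hLsurj z
    have key : polar Q₃ (m₃ e₁ (m₂ e₃ (m₁ e₂ x₃))) (m₃ e₁ y₂)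
        = polar Q₃ e₃ (m₃ (m₁ e₂ x₃) y₂) := by
      rw [hB, he₁, one_mul, polar_comm Q₂, hadj₂ (m₁ e₂ x₃) y₂ e₃]
    have star := hStar (m₁ e₂ x₃) e₁ y₂ e₂
    rw [hmul, hL'R' x₃] at star
    have hu : polar Q₁ (m₁ e₂ x₃) e₁ = polar Q₃ e₃ x₃ := by
      rw [polar_comm Q₁, hadj₁ e₁ e₂ x₃, hmul, polar_comm Q₃]
    have hy : polar Q₂ y₂ e₂ = polar Q₃ (m₃ e₁ y₂) e₃ := by
      rw [← hmul, hB, he₁, one_mul]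
    rw [hu, hy] at star
    have c1 : polar Q₃ e₃ (m₃ (m₁ e₂ x₃) y₂) = polar Q₃ (m₃ (m₁ e₂ x₃) y₂) e₃ :=
      polar_comm _ _ _
    have c2 : polar Q₃ e₃ (m₃ e₁ y₂) = polar Q₃ (m₃ e₁ y₂) e₃ := polar_comm _ _ _
    rw [polar_sub_left, key, polar_sub_left, polar_smul_left, smul_eq_mul]
    linear_combination star + c1 - polar Q₃ e₃ x₃ * c2
  · -- second identity
    rw [← sub_eq_zero]
    apply h₃
    intro z
    obtain ⟨y₁, rfl⟩ := hL'surj z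
    rw [LinearMap.flip_apply]
    have key : polar Q₃ (m₃ (m₁ (m₂ x₃ e₁) e₃) e₂) (m₃ y₁ e₂)
        = polar Q₃ e₃ (m₃ y₁ (m₂ x₃ e₁)) := by
      rw [hA, he₂, mul_one, polar_comm Q₁, hadj₁ y₁ (m₂ x₃ e₁) e₃]
    have star := hStar y₁ e₁ (m₂ x₃ e₁) e₂
    rw [hmul, hLR x₃] at star
    have hv : polar Q₂ (m₂ x₃ e₁) e₂ = polar Q₃ e₃ x₃ := by
      rw [polar_comm Q₂, hadj₂ e₁ e₂ x₃, hmul, polar_comm Q₃]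
    have hy : polar Q₁ y₁ e₁ = polar Q₃ (m₃ y₁ e₂) e₃ := by
      rw [← hmul, hA, he₂, mul_one]
    rw [hv, hy] at star
    have c1 : polar Q₃ e₃ (m₃ y₁ (m₂ x₃ e₁)) = polar Q₃ (m₃ y₁ (m₂ x₃ e₁)) e₃ :=
      polar_comm _ _ _
    have c2 : polar Q₃ e₃ (m₃ y₁ e₂) = polar Q₃ (m₃ y₁ e₂) e₃ := polar_comm _ _ _
    have cx : polar Q₃ x₃ (m₃ y₁ e₂) = polar Q₃ (m₃ y₁ e₂) x₃ := polar_comm _ _ _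
    rw [polar_sub_left, key, polar_sub_left, polar_smul_left, smul_eq_mul]
    linear_combination star + c1 - polar Q₃ e₃ x₃ * c2 + cx
end

section
/- Let C• = ((V₁,q₁,e₁),(V₂,q₂,e₂),(V₃,q₃,e₃),*₃) be a composition of pointed quadratic spaces and define x ⊛ y = (e₂ *₁ x̄) *₃ (ȳ *₂ e₁) for x, y ∈ V₃. Then the composition ((V₃,q₃),(V₃,q₃),(V₃,q₃),⊛) is symmetric, i.e. b₃(x ⊛ y, z) = b₃(x, y ⊛ z) for all x, y, z ∈ V₃, so it equals its own derived compositions. -/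
open QuadraticMap Module

/-- In a composition of pointed quadratic spaces, setting
`x ⊛ y = (e₂ *₁ x̄) *₃ (ȳ *₂ e₁)` for `x, y ∈ V₃` (with `z̄ = b₃(e₃,z)·e₃ − z`),
the composition `((V₃,q₃),(V₃,q₃),(V₃,q₃),⊛)` is symmetric:
`q₃(x ⊛ y) = q₃(x) q₃(y)` and `b₃(x ⊛ y, z) = b₃(x, y ⊛ z)`, so it equals its own
derived compositions. -/
theorem statement14 {F V₁ V₂ V₃ : Type*} [Field F]
    [AddCommGroup V₁] [Module F V₁] [AddCommGroup V₂] [Module F V₂]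
    [AddCommGroup V₃] [Module F V₃]
    [FiniteDimensional F V₁] [FiniteDimensional F V₂] [FiniteDimensional F V₃]
    (Q₁ : QuadraticForm F V₁) (Q₂ : QuadraticForm F V₂) (Q₃ : QuadraticForm F V₃)
    (h₁ : ∀ x : V₁, (∀ y, polar Q₁ x y = 0) → x = 0)
    (h₂ : ∀ x : V₂, (∀ y, polar Q₂ x y = 0) → x = 0)
    (h₃ : ∀ x : V₃, (∀ y, polar Q₃ x y = 0) → x = 0)
    (hd₁₂ : finrank F V₁ = finrank F V₂) (hd₂₃ : finrank F V₂ = finrank F V₃)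
    (m₃ : V₁ →ₗ[F] V₂ →ₗ[F] V₃)
    (hcomp : ∀ x₁ x₂, Q₃ (m₃ x₁ x₂) = Q₁ x₁ * Q₂ x₂)
    (m₁ : V₂ →ₗ[F] V₃ →ₗ[F] V₁)
    (hadj₁ : ∀ x₁ x₂ x₃, polar Q₁ x₁ (m₁ x₂ x₃) = polar Q₃ x₃ (m₃ x₁ x₂))
    (m₂ : V₃ →ₗ[F] V₁ →ₗ[F] V₂)
    (hadj₂ : ∀ x₁ x₂ x₃, polar Q₂ x₂ (m₂ x₃ x₁) = polar Q₃ x₃ (m₃ x₁ x₂))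
    (e₁ : V₁) (e₂ : V₂) (e₃ : V₃)
    (he₁ : Q₁ e₁ = 1) (he₂ : Q₂ e₂ = 1) (he₃ : Q₃ e₃ = 1)
    (hmul : m₃ e₁ e₂ = e₃)
    (conj : V₃ → V₃) (hconj : ∀ z, conj z = polar Q₃ e₃ z • e₃ - z)
    (star : V₃ → V₃ → V₃)
    (hstar : ∀ x y, star x y = m₃ (m₁ e₂ (conj x)) (m₂ (conj y) e₁)) :
    (∀ x y : V₃, Q₃ (star x y) = Q₃ x * Q₃ y) ∧
    (∀ x y z : V₃, polar Q₃ (star x y) z = polar Q₃ x (star y z)) := by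
  classical
  -- Polarization of the composition law in the first variable.
  have P1 : ∀ x₁ y₁ x₂, polar Q₃ (m₃ x₁ x₂) (m₃ y₁ x₂) = polar Q₁ x₁ y₁ * Q₂ x₂ := by
    intro x₁ y₁ x₂
    have h : m₃ x₁ x₂ + m₃ y₁ x₂ = m₃ (x₁ + y₁) x₂ := by simp [map_add]
    simp only [QuadraticMap.polar, h, hcomp]
    ring
  -- Polarization in the second variable.
  have P2 : ∀ x₁ x₂ y₂, polar Q₃ (m₃ x₁ x₂) (m₃ x₁ y₂) = Q₁ x₁ * polar Q₂ x₂ y₂ := by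
    intro x₁ x₂ y₂
    have h : m₃ x₁ x₂ + m₃ x₁ y₂ = m₃ x₁ (x₂ + y₂) := by simp
    simp only [QuadraticMap.polar, h, hcomp]
    ring
  -- Full linearization.
  have P3 : ∀ x₁ y₁ x₂ y₂, polar Q₃ (m₃ x₁ x₂) (m₃ y₁ y₂) + polar Q₃ (m₃ x₁ y₂) (m₃ y₁ x₂)
      = polar Q₁ x₁ y₁ * polar Q₂ x₂ y₂ := by
    intro x₁ y₁ x₂ y₂
    have h := P2 (x₁ + y₁) x₂ y₂
    have hx : m₃ (x₁ + y₁) x₂ = m₃ x₁ x₂ + m₃ y₁ x₂ := by simp [map_add]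
    have hy : m₃ (x₁ + y₁) y₂ = m₃ x₁ y₂ + m₃ y₁ y₂ := by simp [map_add]
    rw [hx, hy, polar_add_left, polar_add_right, polar_add_right] at h
    have h1 := P2 x₁ x₂ y₂
    have h2 := P2 y₁ x₂ y₂
    have hQ : Q₁ (x₁ + y₁) = Q₁ x₁ + Q₁ y₁ + polar Q₁ x₁ y₁ := by
      simp only [QuadraticMap.polar]; ring
    rw [hQ] at h
    have hc : polar Q₃ (m₃ y₁ x₂) (m₃ x₁ y₂) = polar Q₃ (m₃ x₁ y₂) (m₃ y₁ x₂) :=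
      polar_comm _ _ _
    rw [hc] at h
    linear_combination h - h1 - h2
  -- m₁ e₂ is a left inverse of x₁ ↦ m₃ x₁ e₂.
  have M3 : ∀ x₁, m₁ e₂ (m₃ x₁ e₂) = x₁ := by
    intro x₁
    have h : ∀ y, polar Q₁ (m₁ e₂ (m₃ x₁ e₂) - x₁) y = 0 := by
      intro y
      rw [polar_sub_left, polar_comm Q₁ (m₁ e₂ (m₃ x₁ e₂)) y, hadj₁,
        polar_comm Q₃ (m₃ x₁ e₂) (m₃ y e₂), P1, he₂, mul_one, polar_comm Q₁ y x₁,
        sub_self]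
    have := h₁ _ h
    exact (sub_eq_zero.mp this)
  -- m₂ · e₁ is a left inverse of x₂ ↦ m₃ e₁ x₂.
  have M4 : ∀ x₂, m₂ (m₃ e₁ x₂) e₁ = x₂ := by
    intro x₂
    have h : ∀ y, polar Q₂ (m₂ (m₃ e₁ x₂) e₁ - x₂) y = 0 := by
      intro y
      rw [polar_sub_left, polar_comm Q₂ (m₂ (m₃ e₁ x₂) e₁) y, hadj₂,
        polar_comm Q₃ (m₃ e₁ x₂) (m₃ e₁ y), P2, he₁, one_mul, polar_comm Q₂ y x₂,
        sub_self]
    have := h₂ _ h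
    exact (sub_eq_zero.mp this)
  -- The maps α : x₁ ↦ m₃ x₁ e₂ and β : x₂ ↦ m₃ e₁ x₂ are bijective.
  set α : V₁ →ₗ[F] V₃ := (LinearMap.flip m₃) e₂ with hα
  have hαapp : ∀ x₁, α x₁ = m₃ x₁ e₂ := fun _ => rfl
  have hαinj : Function.Injective α := by
    intro a b hab
    have : m₁ e₂ (m₃ a e₂) = m₁ e₂ (m₃ b e₂) := by
      rw [← hαapp, ← hαapp, hab]
    rwa [M3, M3] at this
  have hαsurj : Function.Surjective α :=
    (LinearMap.injective_iff_surjective_of_finrank_eq_finrank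
      (hd₁₂.trans hd₂₃)).mp hαinj
  have M1 : ∀ z, m₃ (m₁ e₂ z) e₂ = z := by
    intro z
    obtain ⟨x, rfl⟩ := hαsurj z
    rw [hαapp, M3]
  set β : V₂ →ₗ[F] V₃ := m₃ e₁ with hβ
  have hβapp : ∀ x₂, β x₂ = m₃ e₁ x₂ := fun _ => rfl
  have hβinj : Function.Injective β := by
    intro a b hab
    have : m₂ (m₃ e₁ a) e₁ = m₂ (m₃ e₁ b) e₁ := by
      rw [← hβapp, ← hβapp, hab]
    rwa [M4, M4] at this
  have hβsurj : Function.Surjective β :=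
    (LinearMap.injective_iff_surjective_of_finrank_eq_finrank hd₂₃).mp hβinj
  have M2 : ∀ z, m₃ e₁ (m₂ z e₁) = z := by
    intro z
    obtain ⟨x, rfl⟩ := hβsurj z
    rw [hβapp, M4]
  -- Isometry properties of the inverse maps.
  have QA : ∀ z, Q₁ (m₁ e₂ z) = Q₃ z := by
    intro z
    conv_rhs => rw [← M1 z]
    rw [hcomp, he₂, mul_one]
  have QB : ∀ z, Q₂ (m₂ z e₁) = Q₃ z := by
    intro z
    conv_rhs => rw [← M2 z]
    rw [hcomp, he₁, one_mul]
  have bA : ∀ z w, polar Q₁ (m₁ e₂ z) (m₁ e₂ w) = polar Q₃ z w := by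
    intro z w
    rw [hadj₁, M1, polar_comm]
  have bB : ∀ z w, polar Q₂ (m₂ z e₁) (m₂ w e₁) = polar Q₃ z w := by
    intro z w
    rw [hadj₂, M2, polar_comm]
  -- The unital composition product.
  set mul : V₃ → V₃ → V₃ := fun x y => m₃ (m₁ e₂ x) (m₂ y e₁) with hmuldef
  have Qmul : ∀ x y, Q₃ (mul x y) = Q₃ x * Q₃ y := by
    intro x y
    rw [hmuldef]
    simp only
    rw [hcomp, QA, QB]
  have mul_e_left : ∀ y, mul e₃ y = y := by
    intro y
    have he : m₁ e₂ e₃ = e₁ := by rw [← hmul, M3]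
    rw [hmuldef]; simp only
    rw [he, M2]
  have mul_e_right : ∀ x, mul x e₃ = x := by
    intro x
    have he : m₂ e₃ e₁ = e₂ := by rw [← hmul, M4]
    rw [hmuldef]; simp only
    rw [he, M1]
  -- Full linearization for `mul`.
  have Hlin : ∀ x y u z, polar Q₃ (mul x y) (mul u z) + polar Q₃ (mul x z) (mul u y)
      = polar Q₃ x u * polar Q₃ y z := by
    intro x y u z
    have := P3 (m₁ e₂ x) (m₁ e₂ u) (m₂ y e₁) (m₂ z e₁)
    rw [bA, bB] at this
    exact this
  -- Bilinearity of `mul` in the forms we need.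
  have mul_left_lin : ∀ (s : F) (u v z : V₃),
      mul (s • u - v) z = s • mul u z - mul v z := by
    intro s u v z
    rw [hmuldef]; simp only
    simp only [_root_.map_sub, _root_.map_smul, LinearMap.sub_apply, LinearMap.smul_apply]
  have mul_right_lin : ∀ (s : F) (u v z : V₃),
      mul z (s • u - v) = s • mul z u - mul z v := by
    intro s u v z
    rw [hmuldef]; simp only
    simp only [_root_.map_sub, _root_.map_smul, LinearMap.sub_apply, LinearMap.smul_apply]
  -- Conjugation facts.
  have bee : polar Q₃ e₃ e₃ = 2 := by
    rw [polar_self, he₃]; norm_num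
  have bconj : ∀ x, polar Q₃ e₃ (conj x) = polar Q₃ e₃ x := by
    intro x
    rw [hconj, polar_sub_right, polar_smul_right, bee, smul_eq_mul]
    ring
  have cc : ∀ x, conj (conj x) = x := by
    intro x
    rw [hconj (conj x), bconj, hconj]
    abel
  have hQsub : ∀ u v : V₃, Q₃ (u - v) = Q₃ u + Q₃ v - polar Q₃ u v := by
    intro u v
    have h : Q₃ (u - v) = polar Q₃ u (-v) + Q₃ u + Q₃ (-v) := by
      simp only [QuadraticMap.polar, sub_eq_add_neg]
      ring
    rw [h, polar_neg_right, QuadraticMap.map_neg]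
    ring
  have Qconj : ∀ x, Q₃ (conj x) = Q₃ x := by
    intro x
    rw [hconj, hQsub, QuadraticMap.map_smul, he₃, polar_smul_left, smul_eq_mul, smul_eq_mul]
    ring
  -- The key adjunction identities.
  have H3a : ∀ x y z, polar Q₃ (mul x y) z = polar Q₃ y (mul (conj x) z) := by
    intro x y z
    have h := Hlin x y e₃ z
    rw [mul_e_left, mul_e_left] at h
    have hc : mul (conj x) z = polar Q₃ e₃ x • z - mul x z := by
      rw [hconj, mul_left_lin, mul_e_left]
    rw [hc, polar_sub_right, polar_smul_right, smul_eq_mul]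
    rw [polar_comm Q₃ x e₃] at h
    have hsym : polar Q₃ (mul x z) y = polar Q₃ y (mul x z) := polar_comm _ _ _
    linear_combination h - hsym
  have H3b : ∀ x y z, polar Q₃ (mul x y) z = polar Q₃ x (mul z (conj y)) := by
    intro x y z
    have h := Hlin x y z e₃
    rw [mul_e_right, mul_e_right] at h
    have hc : mul z (conj y) = polar Q₃ e₃ y • z - mul z y := by
      rw [hconj, mul_right_lin, mul_e_right]
    rw [hc, polar_comm Q₃ x (polar Q₃ e₃ y • z - mul z y), polar_sub_left,
      polar_smul_left, smul_eq_mul]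
    rw [polar_comm Q₃ y e₃] at h
    have hsym1 : polar Q₃ z x = polar Q₃ x z := polar_comm _ _ _
    have hsym2 : polar Q₃ (mul z y) x = polar Q₃ x (mul z y) := polar_comm _ _ _
    linear_combination h + hsym2 - polar Q₃ e₃ y * hsym1
  -- star in terms of mul.
  have hstar' : ∀ x y, star x y = mul (conj x) (conj y) := by
    intro x y; rw [hstar, hmuldef]
  constructor
  · intro x y
    rw [hstar', Qmul, Qconj, Qconj]
  · intro x y z
    rw [hstar' x y, hstar' y z]
    rw [H3a (conj x) (conj y) z, cc]
    have := H3b (conj y) (conj z) x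
    rw [cc] at this
    rw [polar_comm Q₃ x (mul (conj y) (conj z)), this]
end

section
/- Let A = (A, q, ⋄) be a composition algebra over F such that q represents 1, say q(u) = 1. Define ℓ_u(x) = u⋄x, r_u(x) = x⋄u (both invertible isometries of (A,q)), set x * y = r_u⁻¹(x) ⋄ ℓ_u⁻¹(y) and e = u⋄u. Then (A, q, e, *) is a unital composition algebra: q(x*y) = q(x)q(y) and e*x = x*e = x for all x, y ∈ A. -/
open QuadraticMap Module

/-- (Kaplansky's construction.)  Let `(A, q, ⋄)` be a composition
algebra with `q(u) = 1`.  Then `ℓ_u(x) = u⋄x` and `r_u(x) = x⋄u` are invertible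
isometries of `(A,q)`, and with `x * y = r_u⁻¹(x) ⋄ ℓ_u⁻¹(y)` and `e = u⋄u`, the tuple
`(A, q, e, *)` is a unital composition algebra: `q(x*y) = q(x)q(y)` and
`e*x = x*e = x`. -/
theorem statement17 {F A : Type*} [Field F] [AddCommGroup A] [Module F A]
    [FiniteDimensional F A]
    (Q : QuadraticForm F A)
    (hQ : ∀ x : A, (∀ y, polar Q x y = 0) → x = 0)
    (mul : A →ₗ[F] A →ₗ[F] A)
    (hcomp : ∀ x y, Q (mul x y) = Q x * Q y)
    (u : A) (hu : Q u = 1) :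
    ∃ linv rinv : A →ₗ[F] A,
      -- ℓ_u is an invertible isometry with inverse `linv`
      (∀ x, linv (mul u x) = x) ∧ (∀ x, mul u (linv x) = x) ∧
      (∀ x, Q (mul u x) = Q x) ∧
      -- r_u is an invertible isometry with inverse `rinv`
      (∀ x, rinv (mul x u) = x) ∧ (∀ x, mul (rinv x) u = x) ∧
      (∀ x, Q (mul x u) = Q x) ∧
      -- (A, q, u⋄u, *) is a unital composition algebra
      (∀ x y, Q (mul (rinv x) (linv y)) = Q x * Q y) ∧
      (∀ x, mul (rinv (mul u u)) (linv x) = x) ∧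
      (∀ x, mul (rinv x) (linv (mul u u)) = x) := by
  set L : A →ₗ[F] A := mul u with hL
  set R : A →ₗ[F] A := mul.flip u with hR
  have hLq : ∀ x, Q (L x) = Q x := by
    intro x; simp [hL, hcomp, hu]
  have hRq : ∀ x, Q (R x) = Q x := by
    intro x; simp [hR, hcomp, hu]
  have keyinj : ∀ (T : A →ₗ[F] A), (∀ x, Q (T x) = Q x) → Function.Injective T := by
    intro T hT
    rw [← LinearMap.ker_eq_bot, LinearMap.ker_eq_bot']
    intro x hx
    apply hQ
    intro y
    have hx0 : Q x = 0 := by rw [← hT x, hx]; simp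
    have : Q (x + y) = Q y := by
      rw [← hT (x + y), map_add, hx, zero_add, hT]
    simp [polar, this, hx0]
  have hLbij : Function.Bijective L :=
    ⟨keyinj L hLq, (LinearMap.injective_iff_surjective).mp (keyinj L hLq)⟩
  have hRbij : Function.Bijective R :=
    ⟨keyinj R hRq, (LinearMap.injective_iff_surjective).mp (keyinj R hRq)⟩
  let eL := LinearEquiv.ofBijective L hLbij
  let eR := LinearEquiv.ofBijective R hRbij
  refine ⟨eL.symm.toLinearMap, eR.symm.toLinearMap, ?_, ?_, ?_, ?_, ?_, ?_, ?_, ?_, ?_⟩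
  · intro x; exact eL.symm_apply_apply x
  · intro x; exact eL.apply_symm_apply x
  · intro x; exact hLq x
  · intro x; exact eR.symm_apply_apply x
  · intro x; exact eR.apply_symm_apply x
  · intro x; exact hRq x
  · intro x y
    have h1 : Q (eR.symm x) = Q x := by
      conv_rhs => rw [← eR.apply_symm_apply x]
      exact (hRq _).symm
    have h2 : Q (eL.symm y) = Q y := by
      conv_rhs => rw [← eL.apply_symm_apply y]
      exact (hLq _).symm
    rw [hcomp]
    simp only [LinearEquiv.coe_coe]
    rw [h1, h2]
  · intro x
    show mul (eR.symm (R u)) (eL.symm x) = x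
    have hru : (R u : A) = eR u := rfl
    rw [hru, eR.symm_apply_apply]
    exact eL.apply_symm_apply x
  · intro x
    show mul (eR.symm x) (eL.symm (L u)) = x
    have hlu : (L u : A) = eL u := rfl
    rw [hlu, eL.symm_apply_apply]
    exact eR.apply_symm_apply x
end

section
/- Let A = (A,q,⋄) and Ã = (Ã,q̃,⋄̃) be composition algebras over F and let f = (f₁,f₂,f₃) be a triple of bijective linear maps A → Ã. If f is an isotopy, i.e. f₃(x⋄y) = f₁(x) ⋄̃ f₂(y) for all x,y ∈ A, then each fᵢ is a similitude (A,q) → (Ã,q̃), and f is a similitude of the associated compositions of quadratic spaces with composition multiplier (μ(f₂), μ(f₁), 1). -/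
open QuadraticMap Module

private lemma polarML {F A : Type*} [Field F] [AddCommGroup A] [Module F A]
    (n : QuadraticForm F A) (m : A →ₗ[F] A →ₗ[F] A)
    (h : ∀ x y, n (m x y) = n x * n y) (x z y : A) :
    polar n (m x y) (m z y) = polar n x z * n y := by
  have e1 : m x y + m z y = m (x + z) y := by rw [map_add, LinearMap.add_apply]
  simp only [polar, e1, h]
  ring

private lemma polarMR {F A : Type*} [Field F] [AddCommGroup A] [Module F A]
    (n : QuadraticForm F A) (m : A →ₗ[F] A →ₗ[F] A)
    (h : ∀ x y, n (m x y) = n x * n y) (x y w : A) :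
    polar n (m x y) (m x w) = n x * polar n y w := by
  have e1 : m x y + m x w = m x (y + w) := by rw [map_add]
  simp only [polar, e1, h]
  ring

private lemma polarMM {F A : Type*} [Field F] [AddCommGroup A] [Module F A]
    (n : QuadraticForm F A) (m : A →ₗ[F] A →ₗ[F] A)
    (h : ∀ x y, n (m x y) = n x * n y) (x z y w : A) :
    polar n (m x y) (m z w) + polar n (m z y) (m x w) = polar n x z * polar n y w := by
  have key := polarML n m h x z (y + w)
  have e1 : m x (y + w) = m x y + m x w := map_add _ _ _
  have e2 : m z (y + w) = m z y + m z w := map_add _ _ _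
  rw [e1, e2, polar_add_left, polar_add_right, polar_add_right] at key
  rw [polarML n m h x z y, polarML n m h x z w] at key
  have hn : n (y + w) = n y + n w + polar n y w := by simp only [polar]; ring
  rw [hn] at key
  linear_combination key + polar_comm (⇑n) (m z y) (m x w)

private lemma norm_unique {F A : Type*} [Field F] [AddCommGroup A] [Module F A] [Nontrivial A]
    (n n' : QuadraticForm F A) (m : A →ₗ[F] A →ₗ[F] A) (e : A)
    (he₁ : ∀ y, m e y = y) (he₂ : ∀ x, m x e = x)
    (hn : ∀ x y, n (m x y) = n x * n y) (hn' : ∀ x y, n' (m x y) = n' x * n' y)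
    (hns : ∀ x, (∀ y, polar n x y = 0) → x = 0)
    (hns' : ∀ x, (∀ y, polar n' x y = 0) → x = 0) (x : A) :
    n x = n' x := by
  have he0 : e ≠ 0 := by
    intro h
    obtain ⟨u, v, huv⟩ := exists_pair_ne A
    apply huv
    rw [← he₁ u, ← he₁ v, h]
    simp
  have sq : ∀ (N : QuadraticForm F A), (∀ x y, N (m x y) = N x * N y) →
      (∀ x, (∀ w, polar N x w = 0) → x = 0) →
      ∀ x, m x x = polar N x e • x - N x • e := by
    intro N hN hNs x
    have key : ∀ w, polar N (m x x) w = polar N x e * polar N x w - N x * polar N e w := by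
      intro w
      have h1 := polarMM N m hN x e x w
      rw [he₁, he₁] at h1
      have h2 := polarMR N m hN x e w
      rw [he₂] at h2
      linear_combination h1 - h2
    have h0 : m x x - (polar N x e • x - N x • e) = 0 := by
      apply hNs
      intro w
      rw [polar_sub_left, polar_sub_left, polar_smul_left, polar_smul_left, key,
        smul_eq_mul, smul_eq_mul]
      ring
    exact sub_eq_zero.mp h0
  have hone : ∀ (N : QuadraticForm F A), (∀ x y, N (m x y) = N x * N y) →
      (∀ x, (∀ w, polar N x w = 0) → x = 0) → N e = 1 := by
    intro N hN hNs
    by_contra h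
    have hz : ∀ x, N x = 0 := by
      intro x
      have hx := hN x e
      rw [he₂] at hx
      have hx2 : N x * (1 - N e) = 0 := by linear_combination hx
      rcases mul_eq_zero.mp hx2 with h' | h'
      · exact h'
      · exact absurd (by linear_combination -h') h
    have hall : ∀ x : A, x = 0 := fun x => hNs x (fun w => by simp [polar, hz])
    exact he0 (hall e)
  have hne := hone n hn hns
  have hne' := hone n' hn' hns'
  by_cases hx : ∃ c : F, x = c • e
  · obtain ⟨c, rfl⟩ := hx
    rw [QuadraticMap.map_smul, QuadraticMap.map_smul, hne, hne']
  · have hsq := (sq n hn hns x).symm.trans (sq n' hn' hns' x)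
    have hkey : (polar n x e - polar n' x e) • x = (n x - n' x) • e := by
      rw [sub_smul, sub_smul]
      linear_combination (norm := module) hsq
    by_cases ht : polar n x e - polar n' x e = 0
    · rw [ht, zero_smul] at hkey
      have h0 := (smul_eq_zero.mp hkey.symm).resolve_right he0
      exact sub_eq_zero.mp h0
    · exfalso
      apply hx
      refine ⟨(polar n x e - polar n' x e)⁻¹ * (n x - n' x), ?_⟩
      rw [mul_smul, ← hkey, inv_smul_smul₀ ht]



/-- If `f = (f₁,f₂,f₃)` is an isotopy between composition algebras
`(A,q,⋄)` and `(Ã,q̃,⋄̃)` (i.e. `f₃(x⋄y) = f₁(x) ⋄̃ f₂(y)` with each `fᵢ` a bijective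
linear map), then each `fᵢ` is a similitude `(A,q) → (Ã,q̃)`, and `f` is a similitude
of the associated compositions of quadratic spaces with composition multiplier
`(μ(f₂), μ(f₁), 1)`; in particular `μ(f₃) = μ(f₁)μ(f₂)`. -/
theorem statement18 {F A B : Type*} [Field F]
    [AddCommGroup A] [Module F A] [AddCommGroup B] [Module F B]
    [FiniteDimensional F A] [FiniteDimensional F B]
    (Q : QuadraticForm F A) (P : QuadraticForm F B)
    (hQ : ∀ x : A, (∀ y, polar Q x y = 0) → x = 0)
    (hP : ∀ x : B, (∀ y, polar P x y = 0) → x = 0)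
    -- the composition algebra (A, Q, ⋄) with its derived composition maps
    (mul : A →ₗ[F] A →ₗ[F] A)
    (hcomp : ∀ x y, Q (mul x y) = Q x * Q y)
    (d₁ : A →ₗ[F] A →ₗ[F] A)
    (hd₁ : ∀ x y z, polar Q x (d₁ y z) = polar Q (mul x y) z)
    (d₂ : A →ₗ[F] A →ₗ[F] A)
    (hd₂ : ∀ x y z, polar Q (d₂ x y) z = polar Q x (mul y z))
    -- the composition algebra (B, P, ⋄̃) with its derived composition maps
    (mul' : B →ₗ[F] B →ₗ[F] B)
    (hcomp' : ∀ x y, P (mul' x y) = P x * P y)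
    (d₁' : B →ₗ[F] B →ₗ[F] B)
    (hd₁' : ∀ x y z, polar P x (d₁' y z) = polar P (mul' x y) z)
    (d₂' : B →ₗ[F] B →ₗ[F] B)
    (hd₂' : ∀ x y z, polar P (d₂' x y) z = polar P x (mul' y z))
    -- the isotopy (f₁, f₂, f₃)
    (f₁ f₂ f₃ : A →ₗ[F] B)
    (hf₁ : Function.Bijective f₁) (hf₂ : Function.Bijective f₂)
    (hf₃ : Function.Bijective f₃)
    (hiso : ∀ x y, f₃ (mul x y) = mul' (f₁ x) (f₂ y)) :
    ∃ mu₁ mu₂ : Fˣ,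
      -- each fᵢ is a similitude, with μ(f₃) = μ(f₁)μ(f₂)
      (∀ x, P (f₁ x) = (mu₁ : F) * Q x) ∧
      (∀ x, P (f₂ x) = (mu₂ : F) * Q x) ∧
      (∀ x, P (f₃ x) = (mu₁ : F) * (mu₂ : F) * Q x) ∧
      -- f is a similitude of compositions with multiplier (μ(f₂), μ(f₁), 1)
      (∀ x y, (mu₂ : F) • f₁ (d₁ x y) = d₁' (f₂ x) (f₃ y)) ∧
      (∀ x y, (mu₁ : F) • f₂ (d₂ x y) = d₂' (f₃ x) (f₁ y)) := by
  rcases subsingleton_or_nontrivial A with hsub | hnt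
  · have hBsub : Subsingleton B := ⟨fun b b' => by
      obtain ⟨x, hx⟩ := hf₁.2 b
      obtain ⟨y, hy⟩ := hf₁.2 b'
      rw [← hx, ← hy, Subsingleton.elim x y]⟩
    refine ⟨1, 1, fun x => ?_, fun x => ?_, fun x => ?_, fun x y => Subsingleton.elim _ _,
      fun x y => Subsingleton.elim _ _⟩ <;>
      rw [Subsingleton.elim x (0 : A)] <;> simp
  · -- A is nontrivial
    obtain ⟨a, ha⟩ : ∃ a : A, Q a ≠ 0 := by
      by_contra h
      push_neg at h
      obtain ⟨u, v, huv⟩ := exists_pair_ne A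
      have hz : ∀ x : A, x = 0 := fun x => hQ x (fun y => by simp [polar, h])
      exact huv ((hz u).trans (hz v).symm)
    have heqA : ∀ u v : A, (∀ w, polar Q u w = polar Q v w) → u = v := by
      intro u v h
      have h0 := hQ (u - v) (fun w => by rw [polar_sub_left, h, sub_self])
      exact sub_eq_zero.mp h0
    have heqB : ∀ u v : B, (∀ w, polar P u w = polar P v w) → u = v := by
      intro u v h
      have h0 := hP (u - v) (fun w => by rw [polar_sub_left, h, sub_self])
      exact sub_eq_zero.mp h0
    -- basic identities
    have I1 : ∀ y z, d₁ y (mul z y) = Q y • z := by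
      intro y z
      apply heqA
      intro w
      rw [polar_comm, hd₁, polarML Q mul hcomp, polar_smul_left, smul_eq_mul,
        polar_comm (⇑Q) z w]
      ring
    have I2 : ∀ x y, d₂ (mul x y) x = Q x • y := by
      intro x y
      apply heqA
      intro w
      rw [hd₂, polarMR Q mul hcomp, polar_smul_left, smul_eq_mul]
    -- right and left multiplications by a are bijective
    have hRabij : Function.Bijective (mul.flip a) := by
      have hinj : Function.Injective (mul.flip a) := by
        intro u v huv
        simp only [LinearMap.flip_apply] at huv
        have h0 : mul (u - v) a = 0 := by
          rw [_root_.map_sub, LinearMap.sub_apply, huv, sub_self]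
        have h1 := I1 a (u - v)
        rw [h0, map_zero] at h1
        have h2 := (smul_eq_zero.mp h1.symm).resolve_left ha
        exact sub_eq_zero.mp h2
      exact ⟨hinj, LinearMap.injective_iff_surjective.mp hinj⟩
    have hLabij : Function.Bijective (mul a) := by
      have hinj : Function.Injective (mul a) := by
        intro u v huv
        have h0 : mul a (u - v) = 0 := by rw [_root_.map_sub, huv, sub_self]
        have h1 := I2 a (u - v)
        rw [h0, map_zero, LinearMap.zero_apply] at h1
        have h2 := (smul_eq_zero.mp h1.symm).resolve_left ha
        exact sub_eq_zero.mp h2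
      exact ⟨hinj, LinearMap.injective_iff_surjective.mp hinj⟩
    set eR := LinearEquiv.ofBijective (mul.flip a) hRabij with heR
    set eL := LinearEquiv.ofBijective (mul a) hLabij with heL
    have hρ : ∀ x, mul (eR.symm x) a = x := by
      intro x
      have h := eR.apply_symm_apply x
      rwa [heR, LinearEquiv.ofBijective_apply, LinearMap.flip_apply] at h
    have hLam : ∀ y, mul a (eL.symm y) = y := by
      intro y
      have h := eL.apply_symm_apply y
      rwa [heL, LinearEquiv.ofBijective_apply] at h
    have hρe : eR.symm (mul a a) = a := by
      rw [LinearEquiv.symm_apply_eq, heR, LinearEquiv.ofBijective_apply, LinearMap.flip_apply]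
    have hLame : eL.symm (mul a a) = a := by
      rw [LinearEquiv.symm_apply_eq, heL, LinearEquiv.ofBijective_apply]
    have Qρ : ∀ x, Q (eR.symm x) * Q a = Q x := fun x => by rw [← hcomp, hρ]
    have Qlam : ∀ y, Q a * Q (eL.symm y) = Q y := fun y => by rw [← hcomp, hLam]
    have hr2 : P (f₂ a) ≠ 0 := by
      intro h0
      have hB0 : ∀ b : B, P b = 0 := by
        intro b
        obtain ⟨z, hz⟩ := hf₃.2 b
        obtain ⟨x, hxz⟩ := hRabij.2 z
        simp only [LinearMap.flip_apply] at hxz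
        rw [← hz, ← hxz, hiso, hcomp', h0, mul_zero]
      have hball : ∀ b : B, b = 0 := fun b => hP b (fun y => by simp [polar, hB0])
      have hfa : f₁ a = f₁ 0 := by rw [map_zero]; exact hball _
      exact ha (by rw [hf₁.1 hfa, map_zero])
    have hr1 : P (f₁ a) ≠ 0 := by
      intro h0
      have hB0 : ∀ b : B, P b = 0 := by
        intro b
        obtain ⟨z, hz⟩ := hf₃.2 b
        obtain ⟨x, hxz⟩ := hLabij.2 z
        rw [← hz, ← hxz, hiso, hcomp', h0, zero_mul]
      have hball : ∀ b : B, b = 0 := fun b => hP b (fun y => by simp [polar, hB0])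
      have hfa : f₁ a = f₁ 0 := by rw [map_zero]; exact hball _
      exact ha (by rw [hf₁.1 hfa, map_zero])
    -- the unital product
    set m : A →ₗ[F] A →ₗ[F] A := LinearMap.mk₂ F (fun x y => mul (eR.symm x) (eL.symm y))
      (fun x x' y => by simp [map_add, LinearMap.add_apply])
      (fun c x y => by simp only [LinearEquiv.map_smul, LinearMap.map_smul, LinearMap.smul_apply])
      (fun x y y' => by simp [map_add])
      (fun c x y => by simp only [LinearEquiv.map_smul, LinearMap.map_smul, LinearMap.smul_apply]) with hmdef
    have hm : ∀ x y, m x y = mul (eR.symm x) (eL.symm y) := fun _ _ => rfl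
    have he₁ : ∀ y, m (mul a a) y = y := by
      intro y
      rw [hm, hρe, hLam]
    have he₂ : ∀ x, m x (mul a a) = x := by
      intro x
      rw [hm, hLame, hρ]
    set n : QuadraticForm F A := (Q a * Q a)⁻¹ • Q with hndef
    set n' : QuadraticForm F A := (P (f₁ a) * P (f₂ a))⁻¹ • (P.comp f₃) with hn'def
    have hnapp : ∀ x, n x = (Q a * Q a)⁻¹ * Q x := fun x => by
      rw [hndef, QuadraticMap.smul_apply, smul_eq_mul]
    have hn'app : ∀ x, n' x = (P (f₁ a) * P (f₂ a))⁻¹ * P (f₃ x) := fun x => by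
      rw [hn'def, QuadraticMap.smul_apply, smul_eq_mul, QuadraticMap.comp_apply]
    have hQρ' : ∀ x, Q (eR.symm x) = Q x / Q a := by
      intro x
      rw [eq_div_iff ha, Qρ]
    have hQlam' : ∀ y, Q (eL.symm y) = Q y / Q a := by
      intro y
      rw [eq_div_iff ha, mul_comm, Qlam]
    have hF1 : ∀ x, P (f₁ (eR.symm x)) = P (f₃ x) / P (f₂ a) := by
      intro x
      rw [eq_div_iff hr2, ← hcomp', ← hiso, hρ]
    have hF2 : ∀ y, P (f₂ (eL.symm y)) = P (f₃ y) / P (f₁ a) := by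
      intro y
      rw [eq_div_iff hr1, mul_comm, ← hcomp', ← hiso, hLam]
    have hn : ∀ x y, n (m x y) = n x * n y := by
      intro x y
      rw [hnapp, hnapp, hnapp, hm, hcomp, hQρ', hQlam']
      field_simp [ha, hr1, hr2]
    have hn' : ∀ x y, n' (m x y) = n' x * n' y := by
      intro x y
      rw [hn'app, hn'app, hn'app, hm, hiso, hcomp', hF1, hF2]
      field_simp [ha, hr1, hr2]
      try ring
      try tauto
    have hns : ∀ x, (∀ y, polar n x y = 0) → x = 0 := by
      intro x h
      apply hQ
      intro y
      have hc : (Q a * Q a)⁻¹ ≠ 0 := inv_ne_zero (mul_ne_zero ha ha)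
      have h1 := h y
      have h2 : polar n x y = (Q a * Q a)⁻¹ * polar Q x y := by
        simp only [polar, hnapp]
        ring
      rw [h2] at h1
      exact (mul_eq_zero.mp h1).resolve_left hc
    have hns' : ∀ x, (∀ y, polar n' x y = 0) → x = 0 := by
      intro x h
      have hc : (P (f₁ a) * P (f₂ a))⁻¹ ≠ 0 := inv_ne_zero (mul_ne_zero hr1 hr2)
      have h3 : f₃ x = 0 := by
        apply hP
        intro b
        obtain ⟨y, rfl⟩ := hf₃.2 b
        have h1 := h y
        have h2 : polar n' x y = (P (f₁ a) * P (f₂ a))⁻¹ * polar P (f₃ x) (f₃ y) := by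
          simp only [polar, hn'app, ← map_add]
          ring
        rw [h2] at h1
        exact (mul_eq_zero.mp h1).resolve_left hc
      have := hf₃.1 (h3.trans (map_zero f₃).symm)
      exact this
    have huniq : ∀ x, n x = n' x :=
      fun x => norm_unique n n' m (mul a a) he₁ he₂ hn hn' hns hns' x
    have hR3 : ∀ x, P (f₃ x) = (P (f₁ a) * P (f₂ a)) * ((Q a * Q a)⁻¹ * Q x) := by
      intro x
      have h1 := huniq x
      rw [hnapp, hn'app] at h1
      rw [h1, mul_inv_cancel_left₀ (mul_ne_zero hr1 hr2)]
    -- the multipliers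
    have hs1 : ∀ x, P (f₁ x) = (P (f₁ a) / Q a) * Q x := by
      intro x
      have h1 : P (f₁ x) * P (f₂ a) = ((P (f₁ a) / Q a) * Q x) * P (f₂ a) := by
        rw [← hcomp', ← hiso, hR3, hcomp]
        field_simp [ha, hr1, hr2]
      exact mul_right_cancel₀ hr2 h1
    have hs2 : ∀ y, P (f₂ y) = (P (f₂ a) / Q a) * Q y := by
      intro y
      have h1 : P (f₁ a) * P (f₂ y) = P (f₁ a) * ((P (f₂ a) / Q a) * Q y) := by
        rw [← hcomp', ← hiso, hR3, hcomp]
        field_simp [ha, hr1, hr2]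
      exact mul_left_cancel₀ hr1 h1
    have hs3 : ∀ x, P (f₃ x) = (P (f₁ a) / Q a) * (P (f₂ a) / Q a) * Q x := by
      intro x
      rw [hR3]
      field_simp [ha, hr1, hr2]
      try ring
    -- polar versions
    have hpol1 : ∀ u w, polar P (f₁ u) (f₁ w) = (P (f₁ a) / Q a) * polar Q u w := by
      intro u w
      simp only [polar, ← map_add]
      rw [hs1 (u + w), hs1 u, hs1 w]
      ring
    have hpol2 : ∀ u w, polar P (f₂ u) (f₂ w) = (P (f₂ a) / Q a) * polar Q u w := by
      intro u w
      simp only [polar, ← map_add]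
      rw [hs2 (u + w), hs2 u, hs2 w]
      ring
    have hpol3 : ∀ u w, polar P (f₃ u) (f₃ w) = (P (f₁ a) / Q a) * (P (f₂ a) / Q a) * polar Q u w := by
      intro u w
      simp only [polar, ← map_add]
      rw [hs3 (u + w), hs3 u, hs3 w]
      ring
    refine ⟨Units.mk0 (P (f₁ a) / Q a) (div_ne_zero hr1 ha),
      Units.mk0 (P (f₂ a) / Q a) (div_ne_zero hr2 ha), ?_, ?_, ?_, ?_, ?_⟩
    · simpa using hs1
    · simpa using hs2
    · simpa using hs3
    · intro x y
      simp only [Units.val_mk0]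
      apply heqB
      intro b
      obtain ⟨w, rfl⟩ := hf₁.2 b
      rw [polar_smul_left, smul_eq_mul, hpol1]
      rw [polar_comm (⇑P) _ (f₁ w), hd₁', ← hiso, hpol3, ← hd₁]
      rw [polar_comm (⇑Q) (d₁ x y) w]
      ring
    · intro x y
      simp only [Units.val_mk0]
      apply heqB
      intro b
      obtain ⟨w, rfl⟩ := hf₂.2 b
      rw [polar_smul_left, smul_eq_mul, hpol2]
      rw [hd₂', ← hiso, hpol3, ← hd₂]
      ring
end

section
/- Let C = ((V₁,q₁),(V₂,q₂),(V₃,q₃),*₃) be a composition of quadratic spaces with derived maps *₁, *₂, and let u₃ ∈ V₃ be anisotropic. Define ρ_{u₃}(x₃) = u₃·q₃(u₃)⁻¹·b₃(u₃,x₃) − x₃, ℓ_{u₃}(x₂) = x₂ *₁ u₃ and r_{u₃}(x₁) = u₃ *₂ x₁. Then for all x₁ ∈ V₁ and x₂ ∈ V₂: q₃(u₃)·ρ_{u₃}(x₁ *₃ x₂) = (x₂ *₁ u₃) *₃ (u₃ *₂ x₁). -/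
open QuadraticMap Module

private theorem polar_eq_of {F V : Type*} [Field F] [AddCommGroup V] [Module F V]
    (Q : QuadraticForm F V) (h : ∀ x : V, (∀ y, polar Q x y = 0) → x = 0)
    {a b : V} (hab : ∀ y, polar Q a y = polar Q b y) : a = b := by
  have := h (a - b) (fun y => by rw [polar_sub_left, hab, sub_self])
  rwa [sub_eq_zero] at this

/-- Let `*₃` be a composition map with derived maps `*₁`, `*₂`, and
let `u₃ ∈ V₃` be anisotropic.  With `ρ_{u₃}(x₃) = q₃(u₃)⁻¹ b₃(u₃,x₃)·u₃ − x₃`, one has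
`q₃(u₃)·ρ_{u₃}(x₁ *₃ x₂) = (x₂ *₁ u₃) *₃ (u₃ *₂ x₁)` for all `x₁, x₂`. -/
theorem statement19 {F V₁ V₂ V₃ : Type*} [Field F]
    [AddCommGroup V₁] [Module F V₁] [AddCommGroup V₂] [Module F V₂]
    [AddCommGroup V₃] [Module F V₃]
    [FiniteDimensional F V₁] [FiniteDimensional F V₂] [FiniteDimensional F V₃]
    (Q₁ : QuadraticForm F V₁) (Q₂ : QuadraticForm F V₂) (Q₃ : QuadraticForm F V₃)
    (h₁ : ∀ x : V₁, (∀ y, polar Q₁ x y = 0) → x = 0)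
    (h₂ : ∀ x : V₂, (∀ y, polar Q₂ x y = 0) → x = 0)
    (h₃ : ∀ x : V₃, (∀ y, polar Q₃ x y = 0) → x = 0)
    (hd₁₂ : finrank F V₁ = finrank F V₂) (hd₂₃ : finrank F V₂ = finrank F V₃)
    (m₃ : V₁ →ₗ[F] V₂ →ₗ[F] V₃)
    (hcomp : ∀ x₁ x₂, Q₃ (m₃ x₁ x₂) = Q₁ x₁ * Q₂ x₂)
    (m₁ : V₂ →ₗ[F] V₃ →ₗ[F] V₁)
    (hadj₁ : ∀ x₁ x₂ x₃, polar Q₁ x₁ (m₁ x₂ x₃) = polar Q₃ x₃ (m₃ x₁ x₂))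
    (m₂ : V₃ →ₗ[F] V₁ →ₗ[F] V₂)
    (hadj₂ : ∀ x₁ x₂ x₃, polar Q₂ x₂ (m₂ x₃ x₁) = polar Q₃ x₃ (m₃ x₁ x₂))
    (u₃ : V₃) (hu : Q₃ u₃ ≠ 0) :
    ∀ (x₁ : V₁) (x₂ : V₂),
      Q₃ u₃ • (((Q₃ u₃)⁻¹ * polar Q₃ u₃ (m₃ x₁ x₂)) • u₃ - m₃ x₁ x₂) =
        m₃ (m₁ x₂ u₃) (m₂ u₃ x₁) := by
  -- linearizations of the composition law
  have bA : ∀ (a c : V₁) (b : V₂),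
      polar Q₃ (m₃ a b) (m₃ c b) = polar Q₁ a c * Q₂ b := by
    intro a c b
    have h : m₃ a b + m₃ c b = m₃ (a + c) b := by simp [map_add]
    simp only [polar, h, hcomp]
    ring
  have bB : ∀ (a : V₁) (b d : V₂),
      polar Q₃ (m₃ a b) (m₃ a d) = Q₁ a * polar Q₂ b d := by
    intro a b d
    have h : m₃ a b + m₃ a d = m₃ a (b + d) := by simp [map_add]
    simp only [polar, h, hcomp]
    ring
  have bC : ∀ (a c : V₁) (b d : V₂),
      polar Q₃ (m₃ a b) (m₃ c d) + polar Q₃ (m₃ a d) (m₃ c b)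
        = polar Q₁ a c * polar Q₂ b d := by
    intro a c b d
    have h1 := bA a c (b + d)
    have e1 : m₃ a (b + d) = m₃ a b + m₃ a d := by simp [map_add]
    have e2 : m₃ c (b + d) = m₃ c b + m₃ c d := by simp [map_add]
    rw [e1, e2] at h1
    simp only [polar_add_left, polar_add_right] at h1
    have h2 := bA a c b
    have h3 := bA a c d
    have h4 : Q₂ (b + d) = Q₂ b + Q₂ d + polar Q₂ b d := by rw [polar]; ring
    rw [h4] at h1
    linear_combination h1 - h2 - h3
  -- trivial case: Q₂ identically zero forces everything to be trivial
  by_cases hV : ∃ e : V₂, Q₂ e ≠ 0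
  case neg =>
    push_neg at hV
    have hs2 : ∀ x : V₂, x = 0 := fun x => h₂ x (fun y => by simp [polar, hV])
    have hsub : Subsingleton V₂ := ⟨fun a b => by rw [hs2 a, hs2 b]⟩
    have h20 : finrank F V₂ = 0 := by
      rw [finrank_zero_iff_forall_zero]
      exact hs2
    have h30 : finrank F V₃ = 0 := hd₂₃ ▸ h20
    have : Subsingleton V₃ := finrank_zero_iff.mp h30
    intro x₁ x₂
    exact Subsingleton.elim _ _
  case pos =>
  obtain ⟨e, he⟩ := hV
  -- the map `x₁ ↦ m₃ x₁ e` is bijective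
  have hΦinj : Function.Injective (m₃.flip e) := by
    rw [injective_iff_map_eq_zero]
    intro a ha
    rw [LinearMap.flip_apply] at ha
    apply h₁ a
    intro y
    have h := bA a y e
    rw [ha, polar_zero_left] at h
    exact (mul_eq_zero.mp h.symm).resolve_right he
  have hΦsurj : Function.Surjective (m₃.flip e) :=
    (LinearMap.injective_iff_surjective_of_finrank_eq_finrank (hd₁₂.trans hd₂₃)).mp hΦinj
  obtain ⟨w, hw⟩ := hΦsurj u₃
  rw [LinearMap.flip_apply] at hw
  have hQw : Q₁ w ≠ 0 := by
    intro h0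
    apply hu
    rw [← hw, hcomp, h0, zero_mul]
  -- the map `x₂ ↦ m₃ w x₂` is bijective
  have hΨinj : Function.Injective (m₃ w) := by
    rw [injective_iff_map_eq_zero]
    intro b hb
    apply h₂ b
    intro y
    have h := bB w b y
    rw [hb, polar_zero_left] at h
    exact (mul_eq_zero.mp h.symm).resolve_left hQw
  have hΨsurj : Function.Surjective (m₃ w) :=
    (LinearMap.injective_iff_surjective_of_finrank_eq_finrank hd₂₃).mp hΨinj
  -- key identity:  m₃ w (m₂ t w) = Q₁ w • t
  have M2w : ∀ t : V₃, m₃ w (m₂ t w) = Q₁ w • t := by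
    intro t
    apply polar_eq_of Q₃ h₃
    intro y
    obtain ⟨b, hb⟩ := hΨsurj y
    rw [← hb, bB w (m₂ t w) b, polar_smul_left, smul_eq_mul]
    congr 1
    rw [polar_comm, hadj₂ w b t]
  intro x₁ x₂
  rw [smul_sub, smul_smul, mul_inv_cancel_left₀ hu]
  apply polar_eq_of Q₃ h₃
  intro y
  obtain ⟨z, hz⟩ := hΦsurj y
  rw [← hz, LinearMap.flip_apply]
  rw [polar_sub_left, polar_smul_left, polar_smul_left, smul_eq_mul, smul_eq_mul]
  -- abbreviation
  set B' : V₂ := m₂ (m₃ x₁ e) w with hB'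
  -- decomposition of B = m₂ u₃ x₁
  have a5' : m₂ u₃ x₁ + B' = polar Q₁ w x₁ • e := by
    apply polar_eq_of Q₂ h₂
    intro yy
    rw [polar_add_left, polar_smul_left, smul_eq_mul,
      polar_comm Q₂ (m₂ u₃ x₁) yy, hadj₂ x₁ yy u₃,
      polar_comm Q₂ B' yy, hB', hadj₂ w yy (m₃ x₁ e), ← hw]
    have h := bC w x₁ e yy
    rw [polar_comm Q₃ (m₃ w yy) (m₃ x₁ e)] at h
    linear_combination h
  have a5 : m₂ u₃ x₁ = polar Q₁ w x₁ • e - B' := eq_sub_of_add_eq a5'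
  have hzB : m₃ z (m₂ u₃ x₁) = polar Q₁ w x₁ • m₃ z e - m₃ z B' := by
    rw [a5, _root_.map_sub, _root_.map_smul]
  -- decomposition of m₃ A e with A = m₁ x₂ u₃
  have a4 : m₃ (m₁ x₂ u₃) e = polar Q₂ x₂ e • u₃ - Q₂ e • m₃ w x₂ := by
    apply polar_eq_of Q₃ h₃
    intro yy
    obtain ⟨v, hv⟩ := hΦsurj yy
    rw [← hv, LinearMap.flip_apply]
    rw [polar_sub_left, polar_smul_left, polar_smul_left, smul_eq_mul, smul_eq_mul]
    rw [bA (m₁ x₂ u₃) v e]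
    have hAv : polar Q₁ (m₁ x₂ u₃) v = polar Q₃ u₃ (m₃ v x₂) := by
      rw [polar_comm]; exact hadj₁ v x₂ u₃
    rw [hAv]
    have h1 := bC w v x₂ e
    have h2 := bA w v e
    rw [hw] at h1 h2
    linear_combination Q₂ e * h1 - polar Q₂ x₂ e * h2
  -- main bilinear facts
  have E1 := bC (m₁ x₂ u₃) z (m₂ u₃ x₁) e
  have E2 : polar Q₁ (m₁ x₂ u₃) z = polar Q₃ u₃ (m₃ z x₂) := by
    rw [polar_comm]; exact hadj₁ z x₂ u₃
  have E3 : polar Q₂ (m₂ u₃ x₁) e = polar Q₁ w x₁ * Q₂ e := by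
    rw [polar_comm, hadj₂ x₁ e u₃, ← hw]
    exact bA w x₁ e
  have E4 : polar Q₃ (m₃ (m₁ x₂ u₃) e) (m₃ z (m₂ u₃ x₁)) =
      polar Q₂ x₂ e * (polar Q₁ w x₁ * polar Q₃ u₃ (m₃ z e))
        - polar Q₂ x₂ e * polar Q₃ u₃ (m₃ z B')
        - Q₂ e * (polar Q₁ w x₁ * polar Q₃ (m₃ w x₂) (m₃ z e))
        + Q₂ e * polar Q₃ (m₃ w x₂) (m₃ z B') := by
    rw [a4, hzB]
    simp only [polar_sub_left, polar_sub_right, polar_smul_left, polar_smul_right, smul_eq_mul]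
    ring
  have E6 : polar Q₃ u₃ (m₃ z B') =
      polar Q₁ w z * (polar Q₁ w x₁ * Q₂ e) - Q₁ w * (polar Q₁ x₁ z * Q₂ e) := by
    rw [← hw]
    have h1 := bC w z e B'
    have hb : polar Q₂ e B' = polar Q₁ w x₁ * Q₂ e := by
      rw [hB', hadj₂ w e (m₃ x₁ e), bA x₁ w e, polar_comm Q₁ x₁ w]
    have hwB : m₃ w B' = Q₁ w • m₃ x₁ e := M2w (m₃ x₁ e)
    rw [hwB, polar_smul_left, smul_eq_mul, bA x₁ z e, hb] at h1
    linear_combination h1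
  have E7 : polar Q₃ (m₃ w x₂) (m₃ z B') =
      polar Q₁ w z * (polar Q₁ w x₁ * polar Q₂ x₂ e - polar Q₃ u₃ (m₃ x₁ x₂))
        - Q₁ w * (polar Q₂ x₂ e * polar Q₁ x₁ z
            - polar Q₃ (m₃ x₁ x₂) (m₃ z e)) := by
    have h1 := bC w z x₂ B'
    have hx2B : polar Q₂ x₂ B' =
        polar Q₁ w x₁ * polar Q₂ x₂ e - polar Q₃ u₃ (m₃ x₁ x₂) := by
      rw [hB', hadj₂ w x₂ (m₃ x₁ e)]
      have h2 := bC x₁ w e x₂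
      rw [hw] at h2
      have cc1 : polar Q₁ x₁ w = polar Q₁ w x₁ := polar_comm _ _ _
      have cc2 : polar Q₂ e x₂ = polar Q₂ x₂ e := polar_comm _ _ _
      have cc3 : polar Q₃ (m₃ x₁ x₂) u₃ = polar Q₃ u₃ (m₃ x₁ x₂) := polar_comm _ _ _
      linear_combination h2 + polar Q₂ e x₂ * cc1 + polar Q₁ w x₁ * cc2 - cc3
    have hwB : m₃ w B' = Q₁ w • m₃ x₁ e := M2w (m₃ x₁ e)
    rw [hwB, polar_smul_left, smul_eq_mul, hx2B] at h1
    have h3 := bC x₁ z e x₂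
    have cc2 : polar Q₂ e x₂ = polar Q₂ x₂ e := polar_comm _ _ _
    linear_combination h1 - Q₁ w * h3 - (Q₁ w * polar Q₁ x₁ z) * cc2
  have E8 : polar Q₃ (m₃ w x₂) (m₃ z e) + polar Q₃ u₃ (m₃ z x₂)
      = polar Q₁ w z * polar Q₂ x₂ e := by
    have h := bC w z x₂ e
    rwa [hw] at h
  have E9 : polar Q₃ u₃ (m₃ z e) = polar Q₁ w z * Q₂ e := by
    rw [← hw]; exact bA w z e
  have E10 : Q₃ u₃ = Q₁ w * Q₂ e := by rw [← hw, hcomp]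
  linear_combination (-1 : F) * E1 - polar Q₂ (m₂ u₃ x₁) e * E2
    - polar Q₃ u₃ (m₃ z x₂) * E3 + E4 - polar Q₂ x₂ e * E6 + Q₂ e * E7
    - (Q₂ e * polar Q₁ w x₁) * E8
    + (polar Q₂ x₂ e * polar Q₁ w x₁ + polar Q₃ u₃ (m₃ x₁ x₂)) * E9
    - polar Q₃ (m₃ x₁ x₂) (m₃ z e) * E10
end
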